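/- arXiv:2309.14197 — 4 statements merged into one kernel-verified Lean document; each statement's English description precedes it below -/
import Mathlib

section
/- For all integers k ≥ 3 and 1 ≤ d < k and every γ > 0, there exists n₀ such that for every n ≥ n₀ the following holds. If G is an n-vertex k-graph with δ_d(G) ≥ (μ_d(k)+γ)·binom(n−d,k−d) and u, v ∈ V(G) are distinct vertices, then G contains a loose (u,v)-path of order 4(k−1)+1. -/
open Finset

attribute [local instance] Classical.propDecidable

/-- A (hyper)graph: a finite vertex set together with a finite set of edges,
each edge being a finite set of vertices. -/
structure HGraph where
  verts : Finset ℕ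
  edges : Finset (Finset ℕ)

namespace HGraph

/-- `G` is a `k`-graph: every edge is a `k`-element subset of the vertex set. -/
def IsUniform (G : HGraph) (k : ℕ) : Prop :=
  ∀ e ∈ G.edges, e ⊆ G.verts ∧ e.card = k

/-- The degree of a vertex set `S`: the number of edges containing `S`. -/
def deg (G : HGraph) (S : Finset ℕ) : ℕ :=
  (G.edges.filter fun e => S ⊆ e).card

/-- `δ_d(G) ≥ m`: every `d`-element subset of the vertices has degree at least `m`. -/
def MinDegAtLeast (G : HGraph) (d : ℕ) (m : ℝ) : Prop :=
  ∀ S ⊆ G.verts, S.card = d → m ≤ (G.deg S : ℝ)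

/-- The induced subgraph on a vertex set `A`. -/
def induce (G : HGraph) (A : Finset ℕ) : HGraph :=
  ⟨A, G.edges.filter fun e => e ⊆ A⟩

end HGraph

/-! ### Loose paths and loose cycles, encoded by their vertex sequence -/

/-- The `i`-th edge of the loose path with vertex sequence `vs`:
the vertices at positions `i(k-1), …, i(k-1)+k-1`. -/
def pathEdge (k : ℕ) (vs : List ℕ) (i : ℕ) : Finset ℕ :=
  ((List.range k).map fun j => vs.getD (i * (k - 1) + j) 0).toFinset

/-- The number of edges of a loose path on `vs.length` vertices. -/
def numPathEdges (k : ℕ) (vs : List ℕ) : ℕ := (vs.length - 1) / (k - 1)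

/-- `vs` is the vertex sequence of an (abstract) loose path: distinct vertices,
and the number of vertices is `≡ 1 (mod k-1)` and at least `k` (at least one edge). -/
def IsLoosePathList (k : ℕ) (vs : List ℕ) : Prop :=
  vs.Nodup ∧ k ≤ vs.length ∧ (k - 1) ∣ (vs.length - 1)

/-- The edges of the loose path with vertex sequence `vs`. -/
def pathEdges (k : ℕ) (vs : List ℕ) : Finset (Finset ℕ) :=
  ((List.range (numPathEdges k vs)).map (pathEdge k vs)).toFinset

/-- `vs` is the vertex sequence of a loose path in `G`. -/
def HGraph.IsLoosePath (G : HGraph) (k : ℕ) (vs : List ℕ) : Prop :=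
  IsLoosePathList k vs ∧ ∀ i < numPathEdges k vs, pathEdge k vs i ∈ G.edges

/-- `vs` is the vertex sequence of a loose `(u,v)`-path in `G`:
`u` is its first vertex and `v` its last vertex. -/
def HGraph.IsLooseUVPath (G : HGraph) (k : ℕ) (u v : ℕ) (vs : List ℕ) : Prop :=
  G.IsLoosePath k vs ∧ vs.head? = some u ∧ vs.getLast? = some v

/-- The `i`-th edge of the loose cycle with cyclic vertex sequence `vs`. -/
def cycleEdge (k : ℕ) (vs : List ℕ) (i : ℕ) : Finset ℕ :=
  ((List.range k).map fun j => vs.getD ((i * (k - 1) + j) % vs.length) 0).toFinset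

/-- `vs` is the cyclic vertex sequence of an (abstract) loose cycle. -/
def IsLooseCycleList (k : ℕ) (vs : List ℕ) : Prop :=
  vs.Nodup ∧ 3 * (k - 1) ≤ vs.length ∧ (k - 1) ∣ vs.length

/-- The edges of the loose cycle with cyclic vertex sequence `vs`. -/
def cycleEdges (k : ℕ) (vs : List ℕ) : Finset (Finset ℕ) :=
  ((List.range (vs.length / (k - 1))).map (cycleEdge k vs)).toFinset

/-- `vs` is the cyclic vertex sequence of a loose cycle in `G`. -/
def HGraph.IsLooseCycle (G : HGraph) (k : ℕ) (vs : List ℕ) : Prop :=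
  IsLooseCycleList k vs ∧ ∀ i < vs.length / (k - 1), cycleEdge k vs i ∈ G.edges

/-- `G` contains a loose Hamilton cycle. -/
def HGraph.HasLooseHamCycle (G : HGraph) (k : ℕ) : Prop :=
  ∃ vs : List ℕ, G.IsLooseCycle k vs ∧ vs.toFinset = G.verts

/-! ### The minimum-degree threshold `μ_d(k)` -/

/-- `μ` is large enough (as a minimum relative `d`-degree) to force loose Hamilton cycles. -/
def LooseHamProperty (k d : ℕ) (μ : ℝ) : Prop :=
  ∀ γ : ℝ, 0 < γ → ∃ n₀ : ℕ, ∀ n : ℕ, n₀ ≤ n → (k - 1) ∣ n →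
    ∀ G : HGraph, G.IsUniform k → G.verts.card = n →
      G.MinDegAtLeast d ((μ + γ) * ((n - d).choose (k - d) : ℝ)) →
      G.HasLooseHamCycle k

/-- The minimum `d`-degree threshold for loose Hamilton cycles. -/
noncomputable def muD (k d : ℕ) : ℝ :=
  sInf {μ : ℝ | μ ∈ Set.Icc (0 : ℝ) 1 ∧ LooseHamProperty k d μ}

/-! ### The binomial random `k`-graph -/

/-- All `k`-element subsets of `{0, …, n-1}`. -/
def kSets (n k : ℕ) : Finset (Finset ℕ) := (Finset.range n).powersetCard k

/-- The probability that `H_k(n,p)` (with vertex set `{0,…,n-1}`) has edge set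
satisfying the property `P`. -/
noncomputable def probRandom (n k : ℕ) (p : ℝ) (P : Finset (Finset ℕ) → Prop) : ℝ :=
  ∑ E ∈ (kSets n k).powerset,
    if P E then p ^ E.card * (1 - p) ^ ((kSets n k).card - E.card) else 0

/-- The `k`-graph on `{0,…,n-1}` with edge set `E`. -/
def graphOfEdges (n : ℕ) (E : Finset (Finset ℕ)) : HGraph :=
  ⟨Finset.range n, E⟩

/-- The probability that a uniformly random `m`-element subset of `U` satisfies `P`. -/
noncomputable def fracSubsets (U : Finset ℕ) (m : ℕ) (P : Finset ℕ → Prop) : ℝ :=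
  (((U.powersetCard m).filter P).card : ℝ) / ((U.powersetCard m).card : ℝ)

/-! ### Berge cycles and girth -/

/-- `es` is a Berge cycle in the hypergraph with edge set `H`: a sequence of at least two
distinct edges `e_0, …, e_{ℓ-1}` of `H` together with distinct vertices `v_0, …, v_{ℓ-1}`
such that `v_i ∈ e_i ∩ e_{i+1}` (indices mod `ℓ`). -/
def IsBergeCycleIn (H : Finset (Finset ℕ)) (es : List (Finset ℕ)) : Prop :=
  2 ≤ es.length ∧ es.Nodup ∧ (∀ e ∈ es, e ∈ H) ∧
  ∃ vs : List ℕ, vs.Nodup ∧ vs.length = es.length ∧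
    ∀ i < es.length,
      vs.getD i 0 ∈ es.getD i ∅ ∧ vs.getD i 0 ∈ es.getD ((i + 1) % es.length) ∅

/-- The hypergraph with edge set `H` has girth at least `K`. -/
def GirthAtLeast (H : Finset (Finset ℕ)) (K : ℕ) : Prop :=
  ∀ es : List (Finset ℕ), IsBergeCycleIn H es → K ≤ es.length

/-- The hypergraph with edge set `H` is Berge acyclic. -/
def BergeAcyclic (H : Finset (Finset ℕ)) : Prop :=
  ∀ es : List (Finset ℕ), ¬ IsBergeCycleIn H es

/-! ### Absorbers -/

/-- An absorber in `G` rooted in the `(k-1)`-set `X`: a collection of loose paths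
`P₁ j, P₂ j` (`j < q`) such that for each `i ∈ {1,2}` the paths `Pᵢ j` are pairwise
vertex-disjoint, `V(⋃ P₁ j) = V(⋃ P₂ j) ∪ X`, `X ∩ V(⋃ P₂ j) = ∅`, and `P₁ j` and
`P₂ j` have the same first vertex and the same last vertex. -/
structure Absorber (G : HGraph) (k : ℕ) (X : Finset ℕ) where
  q : ℕ
  P₁ : Fin q → List ℕ
  P₂ : Fin q → List ℕ
  path₁ : ∀ j, G.IsLoosePath k (P₁ j)
  path₂ : ∀ j, G.IsLoosePath k (P₂ j)
  ends_head : ∀ j, (P₁ j).head? = (P₂ j).head?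
  ends_last : ∀ j, (P₁ j).getLast? = (P₂ j).getLast?
  disj₁ : ∀ j j', j ≠ j' → Disjoint (P₁ j).toFinset (P₁ j').toFinset
  disj₂ : ∀ j j', j ≠ j' → Disjoint (P₂ j).toFinset (P₂ j').toFinset
  cover : (Finset.univ.biUnion fun j => (P₁ j).toFinset) =
      (Finset.univ.biUnion fun j => (P₂ j).toFinset) ∪ X
  avoid : Disjoint X (Finset.univ.biUnion fun j => (P₂ j).toFinset)

namespace Absorber

variable {G : HGraph} {k : ℕ} {X : Finset ℕ}

/-- The vertex set of an absorber (the vertices of its passive state). -/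
def verts (A : Absorber G k X) : Finset ℕ :=
  Finset.univ.biUnion fun j => (A.P₂ j).toFinset

/-- The order of an absorber. -/
def order (A : Absorber G k X) : ℕ := A.verts.card

/-- The set of all edges of the paths of an absorber. -/
def edgeSet (A : Absorber G k X) : Finset (Finset ℕ) :=
  (Finset.univ.biUnion fun j => pathEdges k (A.P₁ j)) ∪
    (Finset.univ.biUnion fun j => pathEdges k (A.P₂ j))

/-- The `k`-graph associated to an absorber: its edges are the edges of its paths. -/
def graph (A : Absorber G k X) : HGraph := ⟨A.verts ∪ X, A.edgeSet⟩

/-- An absorber is `K`-sparse if the hypergraph formed by the edges of its paths,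
together with `X` as an additional edge, has girth at least `K`. -/
def KSparse (A : Absorber G k X) (K : ℕ) : Prop :=
  GirthAtLeast (insert X A.edgeSet) K

end Absorber

/-! ### `k`-density -/

/-- `m_k(H) ≤ c`: every subgraph `H'` of `H` with more than `k` vertices satisfies
`(e(H') - 1)/(v(H') - k) ≤ c`. -/
def kDensityLE (H : HGraph) (k : ℕ) (c : ℝ) : Prop :=
  ∀ V' ⊆ H.verts, ∀ E' ⊆ H.edges, (∀ e ∈ E', e ⊆ V') → k < V'.card →
    ((E'.card : ℝ) - 1) / ((V'.card : ℝ) - (k : ℝ)) ≤ c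

/-! ### Rooted copies and blow-ups -/

/-- `G` contains a copy of `R` rooted in `X ⊆ V(R)`. -/
def ContainsRootedCopy (G R : HGraph) (X : Finset ℕ) : Prop :=
  ∃ φ : ℕ → ℕ, Set.InjOn φ (R.verts : Set ℕ) ∧ (∀ x ∈ X, φ x = x) ∧
    (∀ v ∈ R.verts, φ v ∈ G.verts) ∧ (∀ e ∈ R.edges, e.image φ ∈ G.edges)

/-- `H` is (a copy of) the blow-up `R*(m, X)`: each vertex of `R` outside `X` is
replaced by `m` copies, the vertices of `X` are kept, and each edge of `R` is replaced
by the corresponding complete `k`-partite `k`-graph. The map `f` projects `H` to `R`. -/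
def IsBlowup (k : ℕ) (R : HGraph) (X : Finset ℕ) (m : ℕ) (H : HGraph) : Prop :=
  ∃ f : ℕ → ℕ,
    (∀ x ∈ X, (H.verts.filter fun v => f v = x) = {x}) ∧
    (∀ u ∈ R.verts \ X, (H.verts.filter fun v => f v = u).card = m) ∧
    (∀ v ∈ H.verts, f v ∈ R.verts) ∧
    H.edges = (H.verts.powersetCard k).filter fun e => e.image f ∈ R.edges

/-! ### Spread sets and degree-2 vertices in loose cycles -/

/-- The cyclic distance between positions `i` and `j` on a cycle of length `ℓ`. -/
def cyclicDist (ℓ i j : ℕ) : ℕ := min ((i + ℓ - j) % ℓ) ((j + ℓ - i) % ℓ)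

/-- `X` is `K`-spread in the loose cycle with cyclic vertex sequence `vs`: any two
distinct vertices of `X` are at least `K` vertices apart in the cyclic ordering. -/
def KSpread (vs : List ℕ) (X : Finset ℕ) (K : ℕ) : Prop :=
  ∀ i < vs.length, ∀ j < vs.length, i ≠ j →
    vs.getD i 0 ∈ X → vs.getD j 0 ∈ X → K ≤ cyclicDist vs.length i j

/-- `x` has degree `2` in the loose cycle with cyclic vertex sequence `vs`, i.e. `x`
sits at a position divisible by `k-1` (where two consecutive edges meet). -/
def IsDegTwoVert (k : ℕ) (vs : List ℕ) (x : ℕ) : Prop :=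
  ∃ i, i < vs.length ∧ vs.getD i 0 = x ∧ (k - 1) ∣ i

/-!
Take an edge `e₁ ∋ u` avoiding `v`, an edge `e₄ ∋ v` avoiding `e₁`, and vertices
`w₁ ∈ e₁ \ {u}`, `w₄ ∈ e₄ \ {v}`; it remains to join `w₁` to `w₄` by a loose path with two edges
that avoids the rest of `e₁ ∪ e₄`.

For `d ≥ 2` this is greedy: every set of at most `d` vertices lies in `Ω(n^(k-d))` edges, while
only `O(n^(k-d-1))` of them meet a given set of `O(k)` vertices.

For `d = 1` one first shows `μ₁(k) ≥ 2^(1-k)`: the `k`-graph of all edges meeting a fixed set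
of `n/(k-1) + 1` vertices at most once has no loose Hamilton cycle, and its relative minimum
degree tends to `((k-2)/(k-1))^(k-1)`. Hence every vertex `w` has more than `n/2` robust
neighbours `x` (vertices lying with `w` in many edges avoiding a given small set), because
otherwise `w` would lie in at most `(1/2 + o(1))^(k-1) binom(n-1, k-1)` edges. The robust
neighbourhoods of `w₁` and `w₄` therefore share a vertex `x`, which is the middle vertex of the
two-edge path.
-/

open Filter Topology Asymptotics
open scoped Nat

lemma Finset.exists_disjoint_of_card_lt {α : Type*} [DecidableEq α] {S : Finset (Finset α)}
    {B : Finset α} {c : ℕ} (hc : ∀ y ∈ B, #{e ∈ S | y ∈ e} ≤ c) (hS : #B * c < #S) :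
    ∃ e ∈ S, Disjoint e B := by
  by_contra! h
  have hcover : S ⊆ B.biUnion fun y => {e ∈ S | y ∈ e} := by
    intro e he
    obtain ⟨y, hye, hyB⟩ := Finset.not_disjoint_iff.mp (h e he)
    exact Finset.mem_biUnion.mpr ⟨y, hyB, Finset.mem_filter.mpr ⟨he, hye⟩⟩
  have := (Finset.card_le_card hcover).trans (Finset.card_biUnion_le_card_mul _ _ _ hc)
  omega

namespace HGraph

variable {G : HGraph} {k : ℕ}

lemma deg_le_choose (hG : G.IsUniform k) (T : Finset ℕ) :
    G.deg T ≤ (#(G.verts \ T)).choose (k - #T) := by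
  rw [← Finset.card_powersetCard]
  refine Finset.card_le_card_of_injOn (· \ T) (fun e he => ?_) (fun e he e' he' hee => ?_)
  · obtain ⟨he, hTe⟩ := Finset.mem_filter.mp he
    rw [Finset.mem_coe, Finset.mem_powersetCard, Finset.card_sdiff_of_subset hTe, (hG e he).2]
    exact ⟨Finset.sdiff_subset_sdiff (hG e he).1 le_rfl, rfl⟩
  · have hT := (Finset.mem_filter.mp he).2
    have hT' := (Finset.mem_filter.mp he').2
    rw [← Finset.sdiff_union_of_subset hT, ← Finset.sdiff_union_of_subset hT']
    exact congrArg (· ∪ T) hee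

lemma deg_le_pow (hG : G.IsUniform k) (T : Finset ℕ) : G.deg T ≤ #G.verts ^ (k - #T) :=
  (deg_le_choose hG T).trans <| (Nat.choose_le_pow _ _).trans <|
    Nat.pow_le_pow_left (Finset.card_le_card Finset.sdiff_subset) _

lemma exists_edge_disjoint_of_pow_lt (hG : G.IsUniform k) {W B : Finset ℕ}
    {S : Finset (Finset ℕ)} (hS : ∀ e ∈ S, e ∈ G.edges ∧ W ⊆ e) (hWB : Disjoint W B)
    (hcard : #B * #G.verts ^ (k - #W - 1) < #S) : ∃ e ∈ S, Disjoint e B := by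
  refine Finset.exists_disjoint_of_card_lt (fun y hy => ?_) hcard
  have hyW : y ∉ W := Finset.disjoint_right.mp hWB hy
  calc #{e ∈ S | y ∈ e} ≤ G.deg (insert y W) :=
        Finset.card_le_card fun e he => by
          obtain ⟨heS, hye⟩ := Finset.mem_filter.mp he
          exact Finset.mem_filter.mpr ⟨(hS e heS).1, Finset.insert_subset hye (hS e heS).2⟩
    _ ≤ #G.verts ^ (k - #W - 1) := by
        simpa [Finset.card_insert_of_notMem hyW, Nat.sub_add_eq] using deg_le_pow hG (insert y W)

lemma exists_edge_superset_disjoint {d : ℕ} {m : ℝ} (hG : G.IsUniform k)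
    (hdeg : G.MinDegAtLeast d m) {W B : Finset ℕ} (hW : W ⊆ G.verts) (hWd : #W ≤ d)
    (hWB : Disjoint W B) (hn : d + #B ≤ #G.verts) (hm : (#B * #G.verts ^ (k - d - 1) : ℕ) < m) :
    ∃ e ∈ G.edges, W ⊆ e ∧ Disjoint e B := by
  have hd : d ≤ #(W ∪ (G.verts \ B)) := by
    have := Finset.le_card_sdiff B G.verts
    have := Finset.card_le_card (Finset.subset_union_right (s₁ := W) (s₂ := G.verts \ B))
    omega
  obtain ⟨T, hWT, hT, hTd⟩ := Finset.exists_subsuperset_card_eq Finset.subset_union_left hWd hd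
  have hTB : Disjoint T B := by
    refine Finset.disjoint_left.mpr fun x hx hxB => ?_
    rcases Finset.mem_union.mp (hT hx) with h | h
    · exact Finset.disjoint_left.mp hWB h hxB
    · exact (Finset.mem_sdiff.mp h).2 hxB
  have hTV : T ⊆ G.verts := fun x hx =>
    (Finset.mem_union.mp (hT hx)).elim (fun h => hW h) fun h => (Finset.mem_sdiff.mp h).1
  obtain ⟨e, he, heB⟩ := exists_edge_disjoint_of_pow_lt hG (W := T) (S := G.edges.filter (T ⊆ ·))
    (fun e he => Finset.mem_filter.mp he) hTB (by
      rw [hTd]; exact_mod_cast hm.trans_le (hdeg T hTV hTd))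
  exact ⟨e, (Finset.mem_filter.mp he).1, hWT.trans (Finset.mem_filter.mp he).2, heB⟩

end HGraph

noncomputable def edgePath (e : Finset ℕ) (a b : ℕ) : List ℕ := a :: ((e \ {a, b}).toList ++ [b])

section LoosePath

variable {k : ℕ} {e : Finset ℕ} {a b : ℕ} {P Q : List ℕ}

lemma edgePath_toFinset (ha : a ∈ e) (hb : b ∈ e) : (edgePath e a b).toFinset = e := by
  ext y
  simp only [edgePath, List.toFinset_cons, List.toFinset_append, Finset.toList_toFinset,
    List.toFinset_cons, List.toFinset_nil, Finset.mem_insert, Finset.mem_union, Finset.mem_sdiff,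
    Finset.mem_singleton, insert_empty_eq]
  constructor
  · rintro (rfl | ⟨hy, -⟩ | rfl) <;> assumption
  · tauto

lemma edgePath_nodup (hab : a ≠ b) : (edgePath e a b).Nodup := by
  simp [edgePath, List.nodup_append, hab, Finset.nodup_toList]

lemma edgePath_length (hab : a ≠ b) (ha : a ∈ e) (hb : b ∈ e) : (edgePath e a b).length = #e := by
  rw [← List.toFinset_card_of_nodup (edgePath_nodup hab), edgePath_toFinset ha hb]

lemma pathEdge_zero_of_length_eq {vs : List ℕ} (h : vs.length = k) :
    pathEdge k vs 0 = vs.toFinset := by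
  ext y
  simp only [pathEdge, zero_mul, zero_add, List.mem_toFinset, List.mem_map, List.mem_range]
  rw [List.mem_iff_getElem]
  constructor
  · rintro ⟨j, hj, rfl⟩
    exact ⟨j, h ▸ hj, (List.getD_eq_getElem _ _ _).symm⟩
  · rintro ⟨j, hj, rfl⟩
    exact ⟨j, h ▸ hj, List.getD_eq_getElem _ _ _⟩

lemma getD_append_tail (hP : P.getLast? = some a) (hQ : Q.head? = some a) (t : ℕ) :
    (P ++ Q.tail).getD (P.length - 1 + t) 0 = Q.getD t 0 := by
  obtain ⟨P', rfl⟩ := List.getLast?_eq_some_iff.mp hP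
  obtain ⟨Q', rfl⟩ := List.head?_eq_some_iff.mp hQ
  rw [List.append_assoc, List.singleton_append, List.tail_cons, List.length_append,
    List.length_singleton, Nat.add_sub_cancel, List.getD_append_right _ _ _ _ (by omega),
    Nat.add_sub_cancel_left]

lemma pathEdge_append_tail_of_lt {i : ℕ} (hi : i < numPathEdges k P) :
    pathEdge k (P ++ Q.tail) i = pathEdge k P i := by
  have hk : 0 < k - 1 := Nat.pos_of_ne_zero fun h => by simp [numPathEdges, h] at hi
  have hlen : (i + 1) * (k - 1) ≤ P.length - 1 := (Nat.le_div_iff_mul_le hk).mp hi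
  unfold pathEdge
  congr 1
  refine List.map_congr_left fun j hj => List.getD_append _ _ _ _ ?_
  have := List.mem_range.mp hj
  rw [add_one_mul] at hlen
  omega

lemma pathEdge_append_tail_add (hdvd : (k - 1) ∣ P.length - 1) (hP : P.getLast? = some a)
    (hQ : Q.head? = some a) (i : ℕ) :
    pathEdge k (P ++ Q.tail) (numPathEdges k P + i) = pathEdge k Q i := by
  unfold pathEdge numPathEdges
  congr 1
  refine List.map_congr_left fun j _ => ?_
  rw [add_mul, Nat.div_mul_cancel hdvd, add_assoc, getD_append_tail hP hQ]

lemma length_append_tail (hQ : Q.head? = some a) :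
    (P ++ Q.tail).length = P.length + Q.length - 1 := by
  obtain ⟨Q', rfl⟩ := List.head?_eq_some_iff.mp hQ
  simp

lemma numPathEdges_append_tail (hdvd : (k - 1) ∣ P.length - 1) (hP : P.getLast? = some a)
    (hQ : Q.head? = some a) :
    numPathEdges k (P ++ Q.tail) = numPathEdges k P + numPathEdges k Q := by
  have hP0 : P.length ≠ 0 := by rintro h; simp [List.length_eq_zero_iff.mp h] at hP
  have hQ0 : Q.length ≠ 0 := by rintro h; simp [List.length_eq_zero_iff.mp h] at hQ
  unfold numPathEdges
  rw [length_append_tail hQ, ← Nat.add_div_of_dvd_right hdvd]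
  congr 1
  omega

lemma toFinset_append_tail (hP : P.getLast? = some a) (hQ : Q.head? = some a) :
    (P ++ Q.tail).toFinset = P.toFinset ∪ Q.toFinset := by
  obtain ⟨P', rfl⟩ := List.getLast?_eq_some_iff.mp hP
  obtain ⟨Q', rfl⟩ := List.head?_eq_some_iff.mp hQ
  ext y
  simp only [List.tail_cons, List.mem_toFinset, List.mem_append, Finset.mem_union,
    List.mem_cons]
  tauto

end LoosePath

namespace HGraph

variable {G : HGraph} {k : ℕ} {e e' : Finset ℕ} {P Q : List ℕ} {u a b x : ℕ}

lemma IsLooseUVPath.append (hP : G.IsLooseUVPath k u a P) (hQ : G.IsLooseUVPath k a b Q)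
    (hPQ : P.toFinset ∩ Q.toFinset = {a}) : G.IsLooseUVPath k u b (P ++ Q.tail) := by
  obtain ⟨⟨⟨hPnd, hPk, hPdvd⟩, hPe⟩, hPu, hPa⟩ := hP
  obtain ⟨⟨⟨hQnd, hQk, hQdvd⟩, hQe⟩, hQa, hQb⟩ := hQ
  have hnd : (P ++ Q.tail).Nodup := by
    obtain ⟨Q', rfl⟩ := List.head?_eq_some_iff.mp hQa
    refine List.nodup_append.mpr ⟨hPnd, (List.nodup_cons.mp hQnd).2, fun x hx y hy hxy => ?_⟩
    subst hxy
    rw [List.tail_cons] at hy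
    have : x ∈ P.toFinset ∩ (a :: Q').toFinset := by simp [hx, hy]
    rw [hPQ, Finset.mem_singleton] at this
    exact (List.nodup_cons.mp hQnd).1 (this ▸ hy)
  refine ⟨⟨⟨hnd, ?_, ?_⟩, fun i hi => ?_⟩, ?_, ?_⟩
  · rw [length_append_tail hQa]
    omega
  · have hP0 : P ≠ [] := by rintro rfl; simp at hPa
    have hQ0 : Q ≠ [] := by rintro rfl; simp at hQa
    rw [length_append_tail hQa]
    convert Nat.dvd_add hPdvd hQdvd using 1
    have := List.length_pos_iff.mpr hP0
    have := List.length_pos_iff.mpr hQ0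
    omega
  · rw [numPathEdges_append_tail hPdvd hPa hQa] at hi
    rcases lt_or_ge i (numPathEdges k P) with hiP | hiP
    · rw [pathEdge_append_tail_of_lt hiP]
      exact hPe i hiP
    · obtain ⟨i', rfl⟩ := Nat.exists_eq_add_of_le hiP
      rw [pathEdge_append_tail_add hPdvd hPa hQa]
      exact hQe i' (by omega)
  · rw [List.head?_append, hPu, Option.some_or]
  · obtain ⟨Q', rfl⟩ := List.head?_eq_some_iff.mp hQa
    rw [List.tail_cons, List.getLast?_append]
    rw [List.getLast?_cons] at hQb
    cases h : Q'.getLast? <;> simp_all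

lemma isLooseUVPath_edgePath (hG : G.IsUniform k) (he : e ∈ G.edges) (hab : a ≠ b) (ha : a ∈ e)
    (hb : b ∈ e) : G.IsLooseUVPath k a b (edgePath e a b) := by
  have hlen : (edgePath e a b).length = k := (edgePath_length hab ha hb).trans (hG e he).2
  have hk : 2 ≤ k := by
    rw [← (hG e he).2, ← Finset.card_pair hab]
    exact Finset.card_le_card (Finset.insert_subset ha (Finset.singleton_subset_iff.mpr hb))
  have hnum : numPathEdges k (edgePath e a b) = 1 := by
    rw [numPathEdges, hlen, Nat.div_self (by omega)]
  refine ⟨⟨⟨edgePath_nodup hab, hlen.ge, by rw [hlen]⟩, fun i hi => ?_⟩, rfl,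
    by simp [edgePath, List.getLast?_cons, List.getLast?_append]⟩
  rw [hnum, Nat.lt_one_iff] at hi
  rw [hi, pathEdge_zero_of_length_eq hlen, edgePath_toFinset ha hb]
  exact he

lemma exists_twoEdge_path (hG : G.IsUniform k) (he : e ∈ G.edges) (he' : e' ∈ G.edges)
    (ha : a ∈ e) (hxe : x ∈ e) (hxe' : x ∈ e') (hb : b ∈ e') (hdisj : Disjoint e' (e.erase x))
    (hax : a ≠ x) (hxb : x ≠ b) :
    ∃ vs, G.IsLooseUVPath k a b vs ∧ vs.length = 2 * (k - 1) + 1 ∧ vs.toFinset = e ∪ e' := by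
  have hee' : e ∩ e' = {x} := by
    refine Finset.eq_singleton_iff_unique_mem.mpr ⟨Finset.mem_inter.mpr ⟨hxe, hxe'⟩, fun y hy => ?_⟩
    obtain ⟨hye, hye'⟩ := Finset.mem_inter.mp hy
    by_contra hyx
    exact Finset.disjoint_left.mp hdisj hye' (Finset.mem_erase.mpr ⟨hyx, hye⟩)
  have hP := isLooseUVPath_edgePath hG he hax ha hxe
  have hQ := isLooseUVPath_edgePath hG he' hxb hxe' hb
  have hk : 0 < k := (hG e he).2 ▸ Finset.card_pos.mpr ⟨a, ha⟩
  refine ⟨_, hP.append hQ ?_, ?_, ?_⟩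
  · rwa [edgePath_toFinset ha hxe, edgePath_toFinset hxe' hb]
  · rw [length_append_tail hQ.2.1, edgePath_length hax ha hxe, edgePath_length hxb hxe' hb,
      (hG e he).2, (hG e' he').2]
    omega
  · rw [toFinset_append_tail hP.2.2 hQ.2.1, edgePath_toFinset ha hxe, edgePath_toFinset hxe' hb]

def IsTwoEdgeLinked (G : HGraph) (k s : ℕ) : Prop :=
  ∀ a ∈ G.verts, ∀ b ∈ G.verts, a ≠ b → ∀ F : Finset ℕ, #F ≤ s → a ∉ F → b ∉ F →
    ∃ vs, G.IsLooseUVPath k a b vs ∧ vs.length = 2 * (k - 1) + 1 ∧ Disjoint vs.toFinset F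

lemma IsLooseUVPath.extend_by_edges {e₁ e₄ : Finset ℕ} {v w₁ w₄ : ℕ} (hG : G.IsUniform k)
    (hQ : G.IsLooseUVPath k w₁ w₄ Q) (he₁ : e₁ ∈ G.edges) (he₄ : e₄ ∈ G.edges)
    (he₄₁ : Disjoint e₄ e₁) (hue₁ : u ∈ e₁) (hw₁e₁ : w₁ ∈ e₁) (hw₄e₄ : w₄ ∈ e₄) (hve₄ : v ∈ e₄)
    (huw₁ : u ≠ w₁) (hw₄v : w₄ ≠ v) (hQF : Disjoint Q.toFinset ((e₁ ∪ e₄) \ {w₁, w₄})) :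
    ∃ vs, G.IsLooseUVPath k u v vs ∧ vs.length = Q.length + 2 * (k - 1) := by
  have hw₄e₁ : w₄ ∉ e₁ := Finset.disjoint_left.mp he₄₁ hw₄e₄
  have hw₁e₄ : w₁ ∉ e₄ := Finset.disjoint_right.mp he₄₁ hw₁e₁
  have hQavoid : ∀ y ∈ Q, y ∈ e₁ ∪ e₄ → y = w₁ ∨ y = w₄ := fun y hy hye => by
    by_contra h
    exact Finset.disjoint_left.mp hQF (List.mem_toFinset.mpr hy)
      (Finset.mem_sdiff.mpr ⟨hye, by simpa using h⟩)
  have hP₁ := isLooseUVPath_edgePath hG he₁ huw₁ hue₁ hw₁e₁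
  have hP₄ := isLooseUVPath_edgePath hG he₄ hw₄v hw₄e₄ hve₄
  have h₁Q : (edgePath e₁ u w₁).toFinset ∩ Q.toFinset = {w₁} := by
    ext y
    simp only [edgePath_toFinset hue₁ hw₁e₁, Finset.mem_inter, List.mem_toFinset,
      Finset.mem_singleton]
    constructor
    · rintro ⟨hy₁, hyQ⟩
      exact (hQavoid y hyQ (Finset.mem_union_left _ hy₁)).resolve_right
        fun h => hw₄e₁ (h ▸ hy₁)
    · rintro rfl
      exact ⟨hw₁e₁, List.mem_of_mem_head? hQ.2.1⟩
  have h₁Q₄ : (edgePath e₁ u w₁ ++ Q.tail).toFinset ∩ (edgePath e₄ w₄ v).toFinset = {w₄} := by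
    ext y
    simp only [toFinset_append_tail hP₁.2.2 hQ.2.1, edgePath_toFinset hue₁ hw₁e₁,
      edgePath_toFinset hw₄e₄ hve₄, Finset.mem_inter, Finset.mem_union, List.mem_toFinset,
      Finset.mem_singleton]
    constructor
    · rintro ⟨hy | hyQ, hy₄⟩
      · exact absurd hy (Finset.disjoint_left.mp he₄₁ hy₄)
      · exact (hQavoid y hyQ (Finset.mem_union_right _ hy₄)).resolve_left
          fun h => hw₁e₄ (h ▸ hy₄)
    · rintro rfl
      exact ⟨Or.inr (List.mem_of_mem_getLast? hQ.2.2), hw₄e₄⟩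
  refine ⟨_, (hP₁.append hQ h₁Q).append hP₄ h₁Q₄, ?_⟩
  have hQ0 : 0 < Q.length := List.length_pos_of_mem (List.mem_of_mem_head? hQ.2.1)
  have hk : 0 < k := (hG e₁ he₁).2 ▸ Finset.card_pos.mpr ⟨u, hue₁⟩
  rw [length_append_tail hP₄.2.1, length_append_tail hQ.2.1, edgePath_length huw₁ hue₁ hw₁e₁,
    edgePath_length hw₄v hw₄e₄ hve₄, (hG e₁ he₁).2, (hG e₄ he₄).2]
  omega

lemma exists_fourEdge_path (hk : 2 ≤ k) (hG : G.IsUniform k)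
    (hedge : ∀ w ∈ G.verts, ∀ B : Finset ℕ, #B ≤ k → w ∉ B → ∃ e ∈ G.edges, w ∈ e ∧ Disjoint e B)
    (hlink : G.IsTwoEdgeLinked k (2 * k)) {u v : ℕ} (hu : u ∈ G.verts) (hv : v ∈ G.verts)
    (huv : u ≠ v) : ∃ vs, G.IsLooseUVPath k u v vs ∧ vs.length = 4 * (k - 1) + 1 := by
  obtain ⟨e₁, he₁, hue₁, hve₁⟩ := hedge u hu {v} (by simp; omega) (by simpa using huv)
  rw [Finset.disjoint_singleton_right] at hve₁
  obtain ⟨e₄, he₄, hve₄, he₄₁⟩ := hedge v hv e₁ (hG e₁ he₁).2.le hve₁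
  obtain ⟨w₁, hw₁⟩ : (e₁.erase u).Nonempty := Finset.card_pos.mp <| by
    rw [Finset.card_erase_of_mem hue₁, (hG e₁ he₁).2]; omega
  obtain ⟨w₄, hw₄⟩ : (e₄.erase v).Nonempty := Finset.card_pos.mp <| by
    rw [Finset.card_erase_of_mem hve₄, (hG e₄ he₄).2]; omega
  obtain ⟨hw₁u, hw₁e₁⟩ := Finset.mem_erase.mp hw₁
  obtain ⟨hw₄v, hw₄e₄⟩ := Finset.mem_erase.mp hw₄
  have hF : #((e₁ ∪ e₄) \ {w₁, w₄}) ≤ 2 * k := by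
    have := Finset.card_union_le e₁ e₄
    have := Finset.card_le_card (Finset.sdiff_subset (s := e₁ ∪ e₄) (t := {w₁, w₄}))
    rw [(hG e₁ he₁).2, (hG e₄ he₄).2] at *
    omega
  have hw₁w₄ : w₁ ≠ w₄ := fun h => Finset.disjoint_left.mp he₄₁ hw₄e₄ (h ▸ hw₁e₁)
  obtain ⟨Q, hQ, hQlen, hQF⟩ := hlink w₁ ((hG e₁ he₁).1 hw₁e₁) w₄ ((hG e₄ he₄).1 hw₄e₄)
    hw₁w₄ _ hF (by simp) (by simp)
  obtain ⟨vs, hvs, hlen⟩ := hQ.extend_by_edges hG he₁ he₄ he₄₁ hue₁ hw₁e₁ hw₄e₄ hve₄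
    (Ne.symm hw₁u) hw₄v hQF
  exact ⟨vs, hvs, by omega⟩

lemma exists_edge_mem_disjoint_of_minDegAtLeast {d : ℕ} {m : ℝ} (hG : G.IsUniform k)
    (hd : 1 ≤ d) (hdeg : G.MinDegAtLeast d m) (hm : ((3 * k) * #G.verts ^ (k - d - 1) : ℕ) < m)
    (hn : 3 * k + d ≤ #G.verts) {w : ℕ} (hw : w ∈ G.verts) {B : Finset ℕ} (hB : #B ≤ k)
    (hwB : w ∉ B) : ∃ e ∈ G.edges, w ∈ e ∧ Disjoint e B := by
  simpa using exists_edge_superset_disjoint hG hdeg (W := {w}) (B := B) (by simpa) (by simpa)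
    (by simpa) (by omega) (lt_of_le_of_lt (by gcongr; omega) hm)

lemma isTwoEdgeLinked_of_minDegAtLeast {d : ℕ} {m : ℝ} (hG : G.IsUniform k) (hd : 2 ≤ d)
    (hdk : d < k) (hdeg : G.MinDegAtLeast d m)
    (hm : ((3 * k) * #G.verts ^ (k - d - 1) : ℕ) < m) (hn : 3 * k + d ≤ #G.verts) :
    G.IsTwoEdgeLinked k (2 * k) := by
  intro a ha b hb hab F hF haF hbF
  have hedge : ∀ W B : Finset ℕ, W ⊆ G.verts → #W ≤ 2 → Disjoint W B → #B ≤ 3 * k →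
      ∃ e ∈ G.edges, W ⊆ e ∧ Disjoint e B := fun W B hW hW2 hWB hB =>
    exists_edge_superset_disjoint hG hdeg hW (by omega) hWB (by omega) <|
      lt_of_le_of_lt (by gcongr) hm
  obtain ⟨x, hx⟩ : (G.verts \ insert a (insert b F)).Nonempty := by
    rw [← Finset.card_pos]
    have := Finset.le_card_sdiff (insert a (insert b F)) G.verts
    have := Finset.card_insert_le a (insert b F)
    have := Finset.card_insert_le b F
    omega
  simp only [Finset.mem_sdiff, Finset.mem_insert, not_or] at hx
  obtain ⟨hxV, hxa, hxb, hxF⟩ := hx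
  obtain ⟨e, he, hWE, heB⟩ := hedge {a, x} (insert b F) (by simp [Finset.insert_subset_iff, *])
    (Finset.card_le_two) (by simp [*, Ne.symm hab, Ne.symm hxb]) (by
      have := Finset.card_insert_le b F; omega)
  have hbe : b ∉ e := fun h => Finset.disjoint_left.mp heB h (Finset.mem_insert_self b F)
  obtain ⟨e', he', hWE', he'B⟩ := hedge {x, b} (F ∪ e.erase x)
    (by simp [Finset.insert_subset_iff, *])
    (Finset.card_le_two) (by simp [*]) (by
      have := Finset.card_union_le F (e.erase x)
      have := Finset.card_erase_le (a := x) (s := e)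
      rw [(hG e he).2] at this
      omega)
  have hxe : x ∈ e := hWE (by simp)
  have hxe' : x ∈ e' := hWE' (by simp)
  obtain ⟨vs, hvs, hlen, hV⟩ := exists_twoEdge_path hG he he' (hWE (by simp)) hxe hxe'
    (hWE' (by simp)) (Finset.disjoint_of_subset_right Finset.subset_union_right he'B)
    (Ne.symm hxa) hxb
  refine ⟨vs, hvs, hlen, hV ▸ Finset.disjoint_union_left.mpr ⟨?_, ?_⟩⟩
  · exact Finset.disjoint_of_subset_right (Finset.subset_insert b F) heB
  · exact Finset.disjoint_of_subset_right Finset.subset_union_left he'B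

/-- The threshold `k * n ^ (k - 3)` bounds the number of edges through `w` and `x` that meet
any given set of `k` further vertices. -/
def robustNbhd (G : HGraph) (k w : ℕ) (F : Finset ℕ) : Finset ℕ :=
  (G.verts \ insert w F).filter fun x =>
    k * #G.verts ^ (k - 3) < #(G.edges.filter fun e => {w, x} ⊆ e ∧ Disjoint e F)

lemma exists_edge_of_mem_robustNbhd (hG : G.IsUniform k) {w x : ℕ} {F B : Finset ℕ}
    (hx : x ∈ G.robustNbhd k w F) (hB : #B ≤ k) (hwB : w ∉ B) (hxB : x ∉ B) :
    ∃ e ∈ G.edges, {w, x} ⊆ e ∧ Disjoint e F ∧ Disjoint e B := by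
  simp only [robustNbhd, Finset.mem_filter, Finset.mem_sdiff, Finset.mem_insert, not_or] at hx
  obtain ⟨⟨-, hxw, -⟩, hcount⟩ := hx
  obtain ⟨e, he, heB⟩ := exists_edge_disjoint_of_pow_lt hG (W := {w, x}) (B := B)
    (S := G.edges.filter fun e => {w, x} ⊆ e ∧ Disjoint e F)
    (fun e he => (Finset.mem_filter.mp he).imp_right And.left)
    (by simp [hwB, hxB]) (by
      rw [Finset.card_pair (Ne.symm hxw), Nat.sub_sub]
      exact lt_of_le_of_lt (Nat.mul_le_mul_right _ hB) hcount)
  obtain ⟨he, hwx, heF⟩ := Finset.mem_filter.mp he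
  exact ⟨e, he, hwx, heF, heB⟩

lemma card_edges_mem_not_disjoint_le (hG : G.IsUniform k) {w : ℕ} {F : Finset ℕ} (hwF : w ∉ F) :
    #{e ∈ G.edges | {w} ⊆ e ∧ ¬Disjoint e F} ≤ #F * #G.verts ^ (k - 2) := by
  have hcover : {e ∈ G.edges | {w} ⊆ e ∧ ¬Disjoint e F} ⊆
      F.biUnion fun f => G.edges.filter ({f, w} ⊆ ·) := fun e he => by
    obtain ⟨he, hwe, heF⟩ := Finset.mem_filter.mp he
    obtain ⟨f, hfe, hfF⟩ := Finset.not_disjoint_iff.mp heF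
    exact Finset.mem_biUnion.mpr ⟨f, hfF, Finset.mem_filter.mpr ⟨he, Finset.insert_subset hfe hwe⟩⟩
  refine (Finset.card_le_card hcover).trans (Finset.card_biUnion_le_card_mul _ _ _ fun f hf => ?_)
  have hfw : f ≠ w := fun h => hwF (h ▸ hf)
  exact (deg_le_pow hG {f, w}).trans_eq (by rw [Finset.card_pair hfw])

lemma card_edges_mem_disjoint_le (hG : G.IsUniform k) (hk : 3 ≤ k) (w : ℕ) (F : Finset ℕ) :
    #{e ∈ G.edges | {w} ⊆ e ∧ Disjoint e F} ≤
      (#(G.robustNbhd k w F)).choose (k - 1) + k * #G.verts ^ (k - 2) := by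
  set R := G.robustNbhd k w F
  set nonrobust := (G.verts \ insert w F) \ R
  set viaNonrobust := nonrobust.biUnion fun x =>
    G.edges.filter fun e => {w, x} ⊆ e ∧ Disjoint e F
  have hcover : {e ∈ G.edges | {w} ⊆ e ∧ Disjoint e F} ⊆
      (R.powersetCard (k - 1)).image (insert w) ∪ viaNonrobust := fun e he => by
    obtain ⟨he, hwe, heF⟩ := Finset.mem_filter.mp he
    rw [Finset.singleton_subset_iff] at hwe
    by_cases heR : e.erase w ⊆ R
    · refine Finset.mem_union_left _ (Finset.mem_image.mpr ⟨e.erase w,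
        Finset.mem_powersetCard.mpr ⟨heR, ?_⟩, Finset.insert_erase hwe⟩)
      rw [Finset.card_erase_of_mem hwe, (hG e he).2]
    · obtain ⟨x, hxe, hxR⟩ := Finset.not_subset.mp heR
      obtain ⟨hxw, hxe⟩ := Finset.mem_erase.mp hxe
      have hxF : x ∉ F := Finset.disjoint_left.mp heF hxe
      refine Finset.mem_union_right _ (Finset.mem_biUnion.mpr ⟨x, ?_, ?_⟩)
      · simp [nonrobust, hxR, (hG e he).1 hxe, hxw, hxF]
      · simp [Finset.insert_subset_iff, he, hwe, hxe, heF]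
  have hvia : #viaNonrobust ≤ k * #G.verts ^ (k - 2) := by
    calc #viaNonrobust ≤ #nonrobust * (k * #G.verts ^ (k - 3)) := by
          refine Finset.card_biUnion_le_card_mul _ _ _ fun x hx => ?_
          obtain ⟨hx, hxR⟩ := Finset.mem_sdiff.mp hx
          simpa [R, robustNbhd, hx] using hxR
      _ ≤ #G.verts * (k * #G.verts ^ (k - 3)) := by
          gcongr
          exact Finset.sdiff_subset.trans Finset.sdiff_subset
      _ = k * #G.verts ^ (k - 2) := by
          rw [show k - 2 = k - 3 + 1 by omega, pow_succ]
          ring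
  refine (Finset.card_le_card hcover).trans <| (Finset.card_union_le _ _).trans ?_
  exact Nat.add_le_add (Finset.card_image_le.trans (Finset.card_powersetCard _ _).le) hvia

lemma deg_le_of_robustNbhd (hG : G.IsUniform k) (hk : 3 ≤ k) {w : ℕ} {F : Finset ℕ}
    (hwF : w ∉ F) :
    G.deg {w} ≤ (#(G.robustNbhd k w F)).choose (k - 1) + (#F + k) * #G.verts ^ (k - 2) := by
  have hsplit := Finset.card_filter_add_card_filter_not
    (s := G.edges.filter (({w} : Finset ℕ) ⊆ ·)) (fun e => Disjoint e F)
  simp only [Finset.filter_filter] at hsplit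
  have := card_edges_mem_disjoint_le hG hk w F
  have := card_edges_mem_not_disjoint_le hG hwF
  rw [deg, ← hsplit]
  nlinarith

lemma isTwoEdgeLinked_of_robustNbhd (hG : G.IsUniform k)
    (hR : ∀ w ∈ G.verts, ∀ F : Finset ℕ, w ∉ F → #F ≤ 2 * k + 1 →
      #G.verts < 2 * #(G.robustNbhd k w F)) :
    G.IsTwoEdgeLinked k (2 * k) := by
  intro a ha b hb hab F hF haF hbF
  set Ra := G.robustNbhd k a (insert b F)
  set Rb := G.robustNbhd k b (insert a F)
  have hRa : #G.verts < 2 * #Ra := hR a ha (insert b F) (by simp [hab, haF])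
    ((Finset.card_insert_le _ _).trans (by omega))
  have hRb : #G.verts < 2 * #Rb := hR b hb (insert a F) (by simp [Ne.symm hab, hbF])
    ((Finset.card_insert_le _ _).trans (by omega))
  obtain ⟨x, hx⟩ : (Ra ∩ Rb).Nonempty := by
    rw [← Finset.card_pos]
    have := Finset.card_union_add_card_inter Ra Rb
    have := Finset.card_le_card (Finset.union_subset (s := Ra) (t := Rb)
      ((Finset.filter_subset _ _).trans Finset.sdiff_subset)
      ((Finset.filter_subset _ _).trans Finset.sdiff_subset))
    omega
  obtain ⟨hxa, hxb⟩ := Finset.mem_inter.mp hx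
  have hxab : x ≠ a ∧ x ≠ b := by
    have := (Finset.mem_filter.mp hxa).1
    simp only [Finset.mem_sdiff, Finset.mem_insert, not_or] at this
    exact ⟨this.2.1, this.2.2.1⟩
  obtain ⟨e, he, hWe, heF, -⟩ := exists_edge_of_mem_robustNbhd hG hxa (B := ∅) (by simp) (by simp)
    (by simp)
  have hbe : b ∉ e := fun h => Finset.disjoint_left.mp heF h (Finset.mem_insert_self b F)
  obtain ⟨e', he', hWe', he'F, he'e⟩ := exists_edge_of_mem_robustNbhd hG hxb (B := e.erase x)
    ((Finset.card_erase_le).trans (hG e he).2.le) (fun h => hbe (Finset.mem_of_mem_erase h))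
    (Finset.notMem_erase x e)
  obtain ⟨vs, hvs, hlen, hV⟩ := exists_twoEdge_path hG he he' (hWe (by simp)) (hWe (by simp))
    (hWe' (by simp)) (hWe' (by simp)) he'e (Ne.symm hxab.1) hxab.2
  refine ⟨vs, hvs, hlen, hV ▸ Finset.disjoint_union_left.mpr ⟨?_, ?_⟩⟩
  · exact Finset.disjoint_of_subset_right (Finset.subset_insert b F) heF
  · exact Finset.disjoint_of_subset_right (Finset.subset_insert a F) he'F

lemma lt_two_mul_card_robustNbhd (hG : G.IsUniform k) (hk : 3 ≤ k) {w : ℕ} {F : Finset ℕ}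
    (hwF : w ∉ F) (hF : #F ≤ 2 * k + 1) {μ : ℝ}
    (hdeg : μ * ((#G.verts - 1).choose (k - 1) : ℝ) ≤ G.deg {w})
    (hn : ((#G.verts : ℝ) / 2) ^ (k - 1) / (k - 1)! + (3 * k + 1) * (#G.verts : ℝ) ^ (k - 2) <
      μ * ((#G.verts - 1).choose (k - 1) : ℝ)) :
    #G.verts < 2 * #(G.robustNbhd k w F) := by
  by_contra! hR
  have hchoose : ((#(G.robustNbhd k w F)).choose (k - 1) : ℝ) ≤
      ((#G.verts : ℝ) / 2) ^ (k - 1) / (k - 1)! := by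
    refine (Nat.choose_le_pow_div _ _).trans ?_
    gcongr
    rw [le_div_iff₀ two_pos]
    exact_mod_cast (mul_comm _ _).trans_le hR
  have hFk : ((#F + k : ℕ) : ℝ) ≤ 3 * k + 1 := by
    exact_mod_cast (show #F + k ≤ 3 * k + 1 by omega)
  have hcount : (G.deg {w} : ℝ) ≤ ((#(G.robustNbhd k w F)).choose (k - 1) : ℝ) +
      ((#F + k : ℕ) : ℝ) * (#G.verts : ℝ) ^ (k - 2) := by
    exact_mod_cast deg_le_of_robustNbhd hG hk hwF
  have := mul_le_mul_of_nonneg_right hFk (by positivity : (0 : ℝ) ≤ (#G.verts : ℝ) ^ (k - 2))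
  linarith

end HGraph

lemma tendsto_choose_div_pow (j : ℕ) :
    Tendsto (fun n : ℕ => (n.choose j : ℝ) / n ^ j) atTop (𝓝 (1 / j !)) := by
  have hne : ∀ᶠ n : ℕ in atTop, (n : ℝ) ≠ 0 := by
    filter_upwards [eventually_ne_atTop 0] with n hn
    exact_mod_cast hn
  have h := ((isEquivalent_iff_tendsto_one (by
    filter_upwards [hne] with n hn
    positivity)).mp (isEquivalent_choose j)).div_const (j ! : ℝ)
  refine h.congr' ?_
  filter_upwards [hne] with n hn
  simp only [Pi.div_apply]
  field_simp

lemma tendsto_choose_mul_sub_div_pow (j : ℕ) {a : ℕ} (ha : 0 < a) (c : ℕ) :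
    Tendsto (fun n : ℕ => ((a * n - c).choose j : ℝ) / n ^ j) atTop (𝓝 (a ^ j / j !)) := by
  have hcn : ∀ᶠ n : ℕ in atTop, c < a * n := by
    filter_upwards [eventually_gt_atTop c] with n hn
    exact hn.trans_le (Nat.le_mul_of_pos_left n ha)
  have hN : Tendsto (fun n : ℕ => a * n - c) atTop atTop :=
    tendsto_atTop_atTop.mpr fun b => ⟨b + c, fun n hn => by
      have := Nat.le_mul_of_pos_left n ha
      omega⟩
  have hratio : Tendsto (fun n : ℕ => ((a * n - c : ℕ) : ℝ) / n) atTop (𝓝 a) := by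
    have : Tendsto (fun n : ℕ => (a : ℝ) - c / n) atTop (𝓝 a) := by
      simpa using tendsto_const_nhds.sub (tendsto_const_div_atTop_nhds_zero_nat (c : ℝ))
    refine this.congr' ?_
    filter_upwards [hcn, eventually_ne_atTop 0] with n hn hn0
    rw [Nat.cast_sub hn.le]
    push_cast
    field_simp
  have h := ((tendsto_choose_div_pow j).comp hN).mul (hratio.pow j)
  rw [one_div_mul_eq_div] at h
  refine h.congr' ?_
  filter_upwards [hcn, eventually_ne_atTop 0] with n hn hn0
  have hN0 : ((a * n - c : ℕ) : ℝ) ≠ 0 := by exact_mod_cast (Nat.sub_pos_of_lt hn).ne'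
  simp only [Function.comp_apply]
  rw [div_pow]
  field_simp

lemma eventually_lt_of_tendsto_div_pow {f g : ℕ → ℝ} {α β : ℝ} (j : ℕ)
    (hf : Tendsto (fun n => f n / n ^ j) atTop (𝓝 α))
    (hg : Tendsto (fun n => g n / n ^ j) atTop (𝓝 β)) (hαβ : α < β) :
    ∀ᶠ n : ℕ in atTop, f n < g n := by
  filter_upwards [hf.eventually_lt hg hαβ, eventually_gt_atTop 0] with n hn hn0
  exact (div_lt_div_iff_of_pos_right (by positivity)).mp hn

lemma eventually_mul_pow_lt_mul_choose (c : ℝ) {γ : ℝ} (hγ : 0 < γ) {k d : ℕ} (hdk : d < k) :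
    ∀ᶠ n : ℕ in atTop, c * n ^ (k - d - 1) < γ * ((n - d).choose (k - d) : ℝ) := by
  have hf : Tendsto (fun n : ℕ => c * n ^ (k - d - 1) / n ^ (k - d)) atTop (𝓝 0) := by
    refine (tendsto_const_div_atTop_nhds_zero_nat c).congr' ?_
    filter_upwards [eventually_ne_atTop 0] with n hn
    have : (n : ℝ) ^ (k - d) = n ^ (k - d - 1) * n := by
      rw [← pow_succ]
      congr 1
      omega
    rw [this]
    field_simp
  have hg := (tendsto_choose_mul_sub_div_pow (k - d) one_pos d).const_mul γ
  simp only [one_mul, Nat.cast_one, one_pow] at hg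
  simp only [← mul_div_assoc] at hg
  exact eventually_lt_of_tendsto_div_pow (k - d) hf hg (by positivity)

lemma eventually_half_pow_add_lt (c : ℝ) {γ : ℝ} (hγ : 0 < γ) {k : ℕ} (hk : 2 ≤ k) :
    ∀ᶠ n : ℕ in atTop, ((n : ℝ) / 2) ^ (k - 1) / (k - 1)! + c * n ^ (k - 2) <
      ((1 / 2) ^ (k - 1) + γ) * ((n - 1).choose (k - 1) : ℝ) := by
  have hf : Tendsto (fun n : ℕ => (((n : ℝ) / 2) ^ (k - 1) / (k - 1)! + c * n ^ (k - 2)) /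
      n ^ (k - 1)) atTop (𝓝 ((1 / 2) ^ (k - 1) / (k - 1)!)) := by
    have := (tendsto_const_div_atTop_nhds_zero_nat c).const_add ((1 / 2 : ℝ) ^ (k - 1) / (k - 1)!)
    rw [add_zero] at this
    refine this.congr' ?_
    filter_upwards [eventually_ne_atTop 0] with n hn
    have : (n : ℝ) ^ (k - 1) = n ^ (k - 2) * n := by
      rw [← pow_succ]
      congr 1
      omega
    rw [div_pow (n : ℝ), this, one_div_pow]
    field_simp
  have hg := (tendsto_choose_mul_sub_div_pow (k - 1) one_pos 1).const_mul ((1 / 2) ^ (k - 1) + γ)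
  simp only [one_mul, Nat.cast_one, one_pow] at hg
  simp only [← mul_div_assoc] at hg
  exact eventually_lt_of_tendsto_div_pow (k - 1) hf hg
    (div_lt_div_of_pos_right (by linarith) (by positivity))

def lowIntersectionGraph (n k b : ℕ) : HGraph :=
  graphOfEdges n ((kSets n k).filter fun e => #(e ∩ Finset.range b) ≤ 1)

section LowIntersectionGraph

variable {n k b : ℕ}

lemma lowIntersectionGraph_isUniform : (lowIntersectionGraph n k b).IsUniform k := fun e he => by
  simp only [lowIntersectionGraph, graphOfEdges, kSets, Finset.mem_filter,
    Finset.mem_powersetCard] at he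
  exact he.1

lemma card_verts_lowIntersectionGraph : #(lowIntersectionGraph n k b).verts = n := by
  simp [lowIntersectionGraph, graphOfEdges]

lemma choose_le_deg_lowIntersectionGraph (hk : 1 ≤ k) {x : ℕ} (hx : x < n) :
    (n - b - 1).choose (k - 1) ≤ (lowIntersectionGraph n k b).deg {x} := by
  set A := (Finset.range n \ Finset.range b).erase x
  have hA : n - b - 1 ≤ #A := by
    have h1 : #(Finset.range n \ Finset.range b) - 1 ≤ #A := Finset.pred_card_le_card_erase
    have h2 : n - b ≤ #(Finset.range n \ Finset.range b) := by
      simpa using Finset.le_card_sdiff (Finset.range b) (Finset.range n)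
    omega
  have hxA : ∀ s ∈ A.powersetCard (k - 1), x ∉ s := fun s hs hxs =>
    Finset.notMem_erase x _ ((Finset.mem_powersetCard.mp hs).1 hxs)
  refine (Nat.choose_le_choose _ hA).trans ?_
  rw [← Finset.card_powersetCard]
  refine Finset.card_le_card_of_injOn (insert x) (fun s hs => ?_) (fun s hs s' hs' hss' => ?_)
  · have hxs := hxA s hs
    obtain ⟨hsA, hsk⟩ := Finset.mem_powersetCard.mp hs
    have hsA' : ∀ y ∈ s, y < n ∧ b ≤ y ∧ y ≠ x := fun y hy => by
      have := hsA hy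
      simp only [A, Finset.mem_erase, Finset.mem_sdiff, Finset.mem_range, not_lt] at this
      exact ⟨this.2.1, this.2.2, this.1⟩
    have hinter : insert x s ∩ Finset.range b ⊆ {x} := fun y hy => by
      obtain ⟨hy, hyb⟩ := Finset.mem_inter.mp hy
      rcases Finset.mem_insert.mp hy with rfl | hy
      · exact Finset.mem_singleton_self y
      · exact absurd (Finset.mem_range.mp hyb) (not_lt.mpr (hsA' y hy).2.1)
    simp only [Finset.mem_coe, lowIntersectionGraph, graphOfEdges, kSets,
      Finset.mem_filter, Finset.mem_powersetCard, Finset.singleton_subset_iff,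
      Finset.mem_insert_self, and_true]
    refine ⟨⟨Finset.insert_subset (Finset.mem_range.mpr hx) fun y hy => ?_, ?_⟩,
      (Finset.card_le_card hinter).trans (Finset.card_singleton x).le⟩
    · exact Finset.mem_range.mpr (hsA' y hy).1
    · rw [Finset.card_insert_of_notMem hxs, hsk]
      omega
  · rw [← Finset.erase_insert (hxA s hs), ← Finset.erase_insert (hxA s' hs'), hss']

lemma getElem_mem_cycleEdge (hk : 2 ≤ k) {vs : List ℕ} {p : ℕ} (hp : p < vs.length) :
    vs[p] ∈ cycleEdge k vs (p / (k - 1)) := by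
  simp only [cycleEdge, List.mem_toFinset, List.mem_map, List.mem_range]
  refine ⟨p % (k - 1), (Nat.mod_lt _ (by omega)).trans (by omega), ?_⟩
  rw [Nat.div_add_mod', Nat.mod_eq_of_lt hp, List.getD_eq_getElem]

lemma not_hasLooseHamCycle_lowIntersectionGraph (hk : 2 ≤ k) (hb : b ≤ n)
    (hn : n < (k - 1) * b) : ¬ (lowIntersectionGraph n k b).HasLooseHamCycle k := by
  rintro ⟨vs, ⟨⟨hnd, -, hdvd⟩, hedges⟩, hspan⟩
  -- The `b` vertices of `{0, …, b-1}` lie in pairwise distinct edges of the cycle, which has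
  -- only `n / (k - 1)` edges.
  have hspan' : vs.toFinset = Finset.range n := hspan
  have hlen : vs.length = n := by
    rw [← List.toFinset_card_of_nodup hnd, hspan', Finset.card_range]
  have hcover : Finset.range b ⊆ (Finset.range (n / (k - 1))).biUnion
      fun i => cycleEdge k vs i ∩ Finset.range b := fun β hβ => by
    have hβvs : β ∈ vs := by
      rw [← List.mem_toFinset, hspan']
      exact Finset.range_subset_range.mpr hb hβ
    obtain ⟨p, hp, rfl⟩ := List.mem_iff_getElem.mp hβvs
    refine Finset.mem_biUnion.mpr ⟨p / (k - 1), ?_, Finset.mem_inter.mpr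
      ⟨getElem_mem_cycleEdge hk hp, hβ⟩⟩
    exact Finset.mem_range.mpr (Nat.div_lt_div_of_lt_of_dvd (hlen ▸ hdvd) (hlen ▸ hp))
  have hcard := (Finset.card_le_card hcover).trans
    (Finset.card_biUnion_le_card_mul _ _ 1 fun i hi => by
      have := hedges i (hlen ▸ Finset.mem_range.mp hi)
      simp only [lowIntersectionGraph, graphOfEdges, Finset.mem_filter] at this
      exact this.2)
  rw [Finset.card_range, Finset.card_range, mul_one] at hcard
  have := Nat.div_mul_le_self n (k - 1)
  nlinarith

end LowIntersectionGraph

lemma looseHamProperty_one (k d : ℕ) : LooseHamProperty k d 1 := by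
  intro γ hγ
  refine ⟨k + d, fun n hn _ G hG hGn hdeg => absurd hdeg fun hdeg => ?_⟩
  obtain ⟨S, hS, hSd⟩ := Finset.exists_subset_card_eq (s := G.verts) (n := d) (by omega)
  have hdegS := (hdeg S hS hSd).trans (Nat.cast_le.mpr (G.deg_le_choose hG S))
  rw [Finset.card_sdiff_of_subset hS, hGn, hSd] at hdegS
  have : (0 : ℝ) < (n - d).choose (k - d) := by exact_mod_cast Nat.choose_pos (by omega)
  nlinarith

lemma minDegAtLeast_lowIntersectionGraph {k m : ℕ} (hk : 3 ≤ k) :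
    (lowIntersectionGraph ((k - 1) * m) k (m + 1)).MinDegAtLeast 1
      (((k - 2) * m - 2).choose (k - 1)) := fun S hS hS1 => by
  obtain ⟨x, rfl⟩ := Finset.card_eq_one.mp hS1
  have hx : x < (k - 1) * m := by
    simpa [lowIntersectionGraph, graphOfEdges] using hS (Finset.mem_singleton_self x)
  have hkm : (k - 1) * m = (k - 2) * m + m := by
    rw [show k - 1 = k - 2 + 1 by omega, Nat.add_one_mul]
  have hdeg := choose_le_deg_lowIntersectionGraph (k := k) (b := m + 1) (by omega) hx
  rw [show (k - 1) * m - (m + 1) - 1 = (k - 2) * m - 2 by omega] at hdeg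
  exact_mod_cast hdeg

lemma half_pow_le_of_looseHamProperty {k : ℕ} (hk : 3 ≤ k) {μ : ℝ}
    (hμ : LooseHamProperty k 1 μ) : (1 / 2) ^ (k - 1) ≤ μ := by
  by_contra! hlt
  set γ := ((1 / 2) ^ (k - 1) - μ) / 2
  obtain ⟨n₀, hn₀⟩ := hμ γ (by simp only [γ]; linarith)
  -- On `(k - 1) m` vertices with `b = m + 1`, the relative minimum degree of
  -- `lowIntersectionGraph` tends to `((k - 2) / (k - 1)) ^ (k - 1) ≥ (1 / 2) ^ (k - 1)`.
  have hlim : (μ + γ) * (((k - 1 : ℕ) : ℝ) ^ (k - 1) / (k - 1)!) <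
      ((k - 2 : ℕ) : ℝ) ^ (k - 1) / (k - 1)! := by
    have hhalf : ((k - 1 : ℕ) : ℝ) / 2 ≤ (k - 2 : ℕ) := by
      rw [div_le_iff₀ two_pos]
      exact_mod_cast (show k - 1 ≤ (k - 2) * 2 by omega)
    calc (μ + γ) * (((k - 1 : ℕ) : ℝ) ^ (k - 1) / (k - 1)!)
        < (1 / 2) ^ (k - 1) * (((k - 1 : ℕ) : ℝ) ^ (k - 1) / (k - 1)!) :=
          mul_lt_mul_of_pos_right (by simp only [γ]; linarith) (by
            have : 0 < k - 1 := by omega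
            positivity)
      _ = (((k - 1 : ℕ) : ℝ) / 2) ^ (k - 1) / (k - 1)! := by ring
      _ ≤ ((k - 2 : ℕ) : ℝ) ^ (k - 1) / (k - 1)! := by gcongr
  have hev : ∀ᶠ m : ℕ in atTop, (μ + γ) * (((k - 1) * m - 1).choose (k - 1) : ℝ) <
      (((k - 2) * m - 2).choose (k - 1) : ℝ) :=
    eventually_lt_of_tendsto_div_pow (k - 1)
      (by simpa only [mul_div_assoc] using
        (tendsto_choose_mul_sub_div_pow (k - 1) (a := k - 1) (by omega) 1).const_mul (μ + γ))
      (tendsto_choose_mul_sub_div_pow (k - 1) (a := k - 2) (by omega) 2) hlim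
  obtain ⟨m, hm, hmn₀⟩ := (hev.and (eventually_ge_atTop (n₀ + 3))).exists
  have hkm : (k - 1) * m = (k - 2) * m + m := by
    rw [show k - 1 = k - 2 + 1 by omega, Nat.add_one_mul]
  have hm2 : m ≤ (k - 2) * m := Nat.le_mul_of_pos_left m (by omega)
  have hkm' : (k - 1) * (m + 1) = (k - 1) * m + (k - 1) := Nat.mul_add_one _ _
  refine not_hasLooseHamCycle_lowIntersectionGraph (n := (k - 1) * m) (b := m + 1) (by omega)
    (by omega) (by omega) (hn₀ _ (by omega) (dvd_mul_right _ _) _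
      lowIntersectionGraph_isUniform card_verts_lowIntersectionGraph fun S hS hS1 =>
        hm.le.trans (minDegAtLeast_lowIntersectionGraph hk S hS hS1))

lemma muD_nonneg (k d : ℕ) : 0 ≤ muD k d := Real.sInf_nonneg fun _ hμ => hμ.1.1

lemma half_pow_le_muD_one {k : ℕ} (hk : 3 ≤ k) : (1 / 2) ^ (k - 1) ≤ muD k 1 :=
  le_csInf ⟨1, ⟨zero_le_one, le_rfl⟩, looseHamProperty_one k 1⟩ fun _ hμ =>
    half_pow_le_of_looseHamProperty hk hμ.2

/-- Dense Connection Lemma. -/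
theorem dense_connection (k d : ℕ) (hk : 3 ≤ k) (hd1 : 1 ≤ d) (hdk : d < k)
    (γ : ℝ) (hγ : 0 < γ) :
    ∃ n₀ : ℕ, ∀ n : ℕ, n₀ ≤ n →
      ∀ G : HGraph, G.IsUniform k → G.verts.card = n →
        G.MinDegAtLeast d ((muD k d + γ) * ((n - d).choose (k - d) : ℝ)) →
        ∀ u ∈ G.verts, ∀ v ∈ G.verts, u ≠ v →
          ∃ vs : List ℕ, G.IsLooseUVPath k u v vs ∧ vs.length = 4 * (k - 1) + 1 := by
  obtain ⟨n₀, hn₀⟩ := eventually_atTop.mp <|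
    (eventually_mul_pow_lt_mul_choose (3 * k : ℕ) hγ hdk).and <|
      (eventually_half_pow_add_lt (3 * k + 1) hγ (k := k) (by omega)).and
        (eventually_ge_atTop (3 * k + d + 1))
  refine ⟨n₀, fun n hn G hG hGn hdeg u hu v hv huv => ?_⟩
  subst hGn
  obtain ⟨hcodeg, hrobust, hlarge⟩ := hn₀ _ hn
  have hdegγ : G.MinDegAtLeast d (γ * ((#G.verts - d).choose (k - d) : ℝ)) := fun S hS hSd =>
    le_trans (by gcongr; linarith [muD_nonneg k d]) (hdeg S hS hSd)
  have hm : ((3 * k) * #G.verts ^ (k - d - 1) : ℕ) < γ * ((#G.verts - d).choose (k - d) : ℝ) := by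
    exact_mod_cast hcodeg
  refine G.exists_fourEdge_path (by omega) hG
    (fun w hw B hB hwB => G.exists_edge_mem_disjoint_of_minDegAtLeast hG hd1 hdegγ hm (by omega)
      hw hB hwB) ?_ hu hv huv
  rcases hd1.eq_or_lt with rfl | hd2
  · refine G.isTwoEdgeLinked_of_robustNbhd hG fun w hw F hwF hF =>
      G.lt_two_mul_card_robustNbhd hG hk hwF hF (le_trans ?_ (hdeg {w} (by simpa) rfl)) hrobust
    gcongr
    exact half_pow_le_muD_one hk
  · exact G.isTwoEdgeLinked_of_minDegAtLeast hG hd2 hdk hdegγ hm (by omega)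
end

section
/- For all integers k ≥ 3 and T ≥ 1 and every γ > 0, there exists K₀ such that for every K ≥ K₀ the following holds. Let H be the k-graph that is the union of T copies of a K-sparse k-uniform absorber which are all rooted in the same (k−1)-set X but are pairwise vertex-disjoint outside X, where the edge set of H consists of the edges of the paths of these absorbers. Then m_k(H) ≤ 2/(k−1) + γ. -/
open Finset

attribute [local instance] Classical.propDecidable

/-!
Let `H'` be a subgraph of the book with `e` edges and `v > k` vertices. Outside `X` the absorbers
are vertex-disjoint, so a Berge cycle of the book that uses several absorbers can be cut at its
first change of absorber and closed through the edge `X`; this gives a shorter Berge cycle in a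
single absorber together with `X`. Hence the book has girth at least `K`, and if `e < K` then `H'`
is Berge acyclic and spans at least `e (k - 1) + 1` vertices, so its density is at most
`1 / (k - 1)`. If `e ≥ K` we count tails instead: in each of the `2T` systems of vertex-disjoint
loose paths, distinct edges have disjoint sets of `k - 1` non-first vertices, so
`e (k - 1) ≤ 2 v + 2 T (k - 1)`, which gives density at most `2 / (k - 1) + γ` once `K` is large.
-/

namespace List

variable {α : Type*} {l : List α} {d : α}

theorem getD_mem_of_lt {i : ℕ} (hi : i < l.length) : l.getD i d ∈ l := by
  rw [getD_eq_getElem _ _ hi]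
  exact getElem_mem hi

theorem Nodup.getD_inj (h : l.Nodup) {i j : ℕ} (hi : i < l.length) (hj : j < l.length)
    (hij : l.getD i d = l.getD j d) : i = j := by
  rw [getD_eq_getElem _ _ hi, getD_eq_getElem _ _ hj] at hij
  exact h.getElem_inj_iff.mp hij

theorem Nodup.getD_notMem_take (h : l.Nodup) {i j : ℕ} (hj : j < l.length) (hij : i ≤ j) :
    l.getD j d ∉ l.take i := by
  intro hm
  obtain ⟨j', hj', heq⟩ := mem_take_iff_getElem.mp hm
  rw [← getD_eq_getElem _ d] at heq
  have := h.getD_inj (by omega) hj heq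
  omega

theorem Nodup.getD_notMem_drop (h : l.Nodup) {i j : ℕ} (hj : j < i) : l.getD j d ∉ l.drop i := by
  intro hm
  obtain ⟨j', hj', heq⟩ := mem_drop_iff_getElem.mp hm
  rw [← getD_eq_getElem _ d] at heq
  have := h.getD_inj (by omega) (by omega) heq
  omega

theorem getD_drop {a i : ℕ} : (l.drop a).getD i d = l.getD (a + i) d := by
  simp [getD_eq_getElem?_getD]

theorem getD_rotate {n i : ℕ} (hi : i < l.length) :
    (l.rotate n).getD i d = l.getD ((i + n) % l.length) d := by
  rw [getD_eq_getElem _ _ (by rwa [length_rotate]), getElem_rotate,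
    getD_eq_getElem _ _ (Nat.mod_lt _ (by omega))]

end List

section LoosePath

variable {k : ℕ} {vs : List ℕ}

theorem IsLoosePathList.index_lt_length (h : IsLoosePathList k vs) {i j : ℕ}
    (hi : i < numPathEdges k vs) (hj : j < k) : i * (k - 1) + j < vs.length := by
  have hnum : numPathEdges k vs * (k - 1) = vs.length - 1 := Nat.div_mul_cancel h.2.2
  have hle : (i + 1) * (k - 1) ≤ numPathEdges k vs * (k - 1) := Nat.mul_le_mul_right _ hi
  rw [add_one_mul] at hle
  have := h.2.1
  omega

theorem pathEdge_eq_image (k : ℕ) (vs : List ℕ) (i : ℕ) :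
    pathEdge k vs i = (range k).image fun j => vs.getD (i * (k - 1) + j) 0 := by
  ext x
  simp [pathEdge]

theorem IsLoosePathList.pathEdge_subset (h : IsLoosePathList k vs) {i : ℕ}
    (hi : i < numPathEdges k vs) : pathEdge k vs i ⊆ vs.toFinset := by
  intro x hx
  simp only [pathEdge_eq_image, mem_image, mem_range] at hx
  obtain ⟨j, hj, rfl⟩ := hx
  exact List.mem_toFinset.mpr (List.getD_mem_of_lt (h.index_lt_length hi hj))

theorem IsLoosePathList.subset_of_mem_pathEdges (h : IsLoosePathList k vs) {e : Finset ℕ}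
    (he : e ∈ pathEdges k vs) : e ⊆ vs.toFinset := by
  simp only [pathEdges, List.mem_toFinset, List.mem_map, List.mem_range] at he
  obtain ⟨i, hi, rfl⟩ := he
  exact h.pathEdge_subset hi

def pathEdgeTail (k : ℕ) (vs : List ℕ) (i : ℕ) : Finset ℕ :=
  (Icc 1 (k - 1)).image fun j => vs.getD (i * (k - 1) + j) 0

theorem pathEdgeTail_subset_pathEdge (k : ℕ) (vs : List ℕ) (i : ℕ) :
    pathEdgeTail k vs i ⊆ pathEdge k vs i := by
  rw [pathEdge_eq_image]
  refine image_subset_image fun j hj => ?_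
  simp only [mem_Icc] at hj
  simp only [mem_range]
  omega

theorem IsLoosePathList.card_pathEdgeTail (h : IsLoosePathList k vs) {i : ℕ}
    (hi : i < numPathEdges k vs) : (pathEdgeTail k vs i).card = k - 1 := by
  rw [pathEdgeTail, card_image_of_injOn, Nat.card_Icc, Nat.add_sub_cancel]
  intro a ha b hb hab
  simp only [coe_Icc, Set.mem_Icc] at ha hb
  have := h.1.getD_inj (h.index_lt_length hi (by omega)) (h.index_lt_length hi (by omega)) hab
  omega

theorem IsLoosePathList.disjoint_pathEdgeTail (h : IsLoosePathList k vs) {i i' : ℕ}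
    (hi : i < numPathEdges k vs) (hi' : i' < numPathEdges k vs) (hne : i ≠ i') :
    Disjoint (pathEdgeTail k vs i) (pathEdgeTail k vs i') := by
  wlog hlt : i < i' generalizing i i'
  · exact (this hi' hi hne.symm (by omega)).symm
  rw [disjoint_left]
  intro x hx hx'
  simp only [pathEdgeTail, mem_image, mem_Icc] at hx hx'
  obtain ⟨j, hj, rfl⟩ := hx
  obtain ⟨j', hj', heq⟩ := hx'
  have hpos := h.1.getD_inj (h.index_lt_length hi' (by omega)) (h.index_lt_length hi (by omega)) heq
  have hle : (i + 1) * (k - 1) ≤ i' * (k - 1) := Nat.mul_le_mul_right _ hlt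
  rw [add_one_mul] at hle
  omega

/-- In a family of vertex-disjoint loose paths, distinct edges have disjoint tails
`pathEdgeTail` of size `k - 1`. -/
theorem card_mul_le_card_biUnion_of_subset_pathEdges {ι : Type*} [Fintype ι] (P : ι → List ℕ)
    (hP : ∀ p, IsLoosePathList k (P p))
    (hdisj : ∀ p p', p ≠ p' → Disjoint (P p).toFinset (P p').toFinset)
    {S : Finset (Finset ℕ)} (hS : S ⊆ univ.biUnion fun p => pathEdges k (P p)) :
    S.card * (k - 1) ≤ (S.biUnion id).card := by
  set edge : (Σ _ : ι, ℕ) → Finset ℕ := fun x => pathEdge k (P x.1) x.2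
  set tail : (Σ _ : ι, ℕ) → Finset ℕ := fun x => pathEdgeTail k (P x.1) x.2
  set I := (univ.sigma fun p => range (numPathEdges k (P p))).filter fun x => edge x ∈ S
  have hI : ∀ x ∈ I, x.2 < numPathEdges k (P x.1) ∧ edge x ∈ S := by
    intro x hx
    simpa [I] using hx
  have hSI : S ⊆ I.image edge := by
    intro e he
    obtain ⟨p, -, hp⟩ := mem_biUnion.mp (hS he)
    simp only [pathEdges, List.mem_toFinset, List.mem_map, List.mem_range] at hp
    obtain ⟨i, hi, rfl⟩ := hp
    exact mem_image.mpr ⟨⟨p, i⟩, by simpa [I, edge] using ⟨hi, he⟩, rfl⟩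
  have htail : (I : Set (Σ _ : ι, ℕ)).PairwiseDisjoint tail := by
    rintro ⟨p, i⟩ hx ⟨p', i'⟩ hx' hne
    have hi := (hI _ hx).1
    have hi' := (hI _ hx').1
    by_cases hp : p = p'
    · subst hp
      exact (hP p).disjoint_pathEdgeTail hi hi' fun h => hne (by simp only at h; rw [h])
    · refine (hdisj p p' hp).mono ?_ ?_
      · exact (pathEdgeTail_subset_pathEdge _ _ _).trans ((hP p).pathEdge_subset hi)
      · exact (pathEdgeTail_subset_pathEdge _ _ _).trans ((hP p').pathEdge_subset hi')
  calc S.card * (k - 1) ≤ I.card * (k - 1) :=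
        Nat.mul_le_mul_right _ ((card_le_card hSI).trans card_image_le)
    _ = ∑ x ∈ I, (tail x).card := by
        rw [sum_congr rfl fun x hx => (hP x.1).card_pathEdgeTail (hI x hx).1, sum_const,
          smul_eq_mul]
    _ = (I.biUnion tail).card := (card_biUnion htail).symm
    _ ≤ (S.biUnion id).card := by
        refine card_le_card (biUnion_subset.mpr fun x hx => ?_)
        exact (pathEdgeTail_subset_pathEdge _ _ _).trans (subset_biUnion_of_mem id (hI x hx).2)

end LoosePath

namespace Absorber

variable {G : HGraph} {k : ℕ} {X : Finset ℕ}

theorem subset_verts_union_of_mem_edgeSet (A : Absorber G k X) {e : Finset ℕ}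
    (he : e ∈ A.edgeSet) : e ⊆ A.verts ∪ X := by
  rcases mem_union.mp he with he | he
  · obtain ⟨p, -, hp⟩ := mem_biUnion.mp he
    rw [verts, ← A.cover]
    exact ((A.path₁ p).1.subset_of_mem_pathEdges hp).trans
      (subset_biUnion_of_mem (fun j => (A.P₁ j).toFinset) (mem_univ p))
  · obtain ⟨p, -, hp⟩ := mem_biUnion.mp he
    exact ((A.path₂ p).1.subset_of_mem_pathEdges hp).trans
      ((subset_biUnion_of_mem (fun j => (A.P₂ j).toFinset) (mem_univ p)).trans subset_union_left)

/-- Each of the two path systems of an absorber contributes at most `|⋃ S \ X| + |X|`. -/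
theorem card_mul_le (A : Absorber G k X) {S : Finset (Finset ℕ)} (hS : S ⊆ A.edgeSet) :
    S.card * (k - 1) ≤ 2 * ((S.biUnion id) \ X).card + 2 * X.card := by
  have side : ∀ S' ⊆ S, S'.card * (k - 1) ≤ (S'.biUnion id).card →
      S'.card * (k - 1) ≤ ((S.biUnion id) \ X).card + X.card := by
    intro S' hS' h
    calc S'.card * (k - 1) ≤ (S'.biUnion id).card := h
      _ ≤ ((S'.biUnion id) \ X).card + X.card := card_le_card_sdiff_add_card
      _ ≤ ((S.biUnion id) \ X).card + X.card := by gcongr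
  set S₁ := S.filter (· ∈ univ.biUnion fun p => pathEdges k (A.P₁ p))
  set S₂ := S.filter (· ∈ univ.biUnion fun p => pathEdges k (A.P₂ p))
  have h₁ := side S₁ (filter_subset _ _) <| card_mul_le_card_biUnion_of_subset_pathEdges _
    (fun p => (A.path₁ p).1) A.disj₁ fun e he => (mem_filter.mp he).2
  have h₂ := side S₂ (filter_subset _ _) <| card_mul_le_card_biUnion_of_subset_pathEdges _
    (fun p => (A.path₂ p).1) A.disj₂ fun e he => (mem_filter.mp he).2
  have hcard : S.card ≤ S₁.card + S₂.card := by
    refine (card_le_card fun e he => ?_).trans (card_union_le S₁ S₂)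
    rcases mem_union.mp (hS he) with h | h
    · exact mem_union_left _ (mem_filter.mpr ⟨he, h⟩)
    · exact mem_union_right _ (mem_filter.mpr ⟨he, h⟩)
  calc S.card * (k - 1) ≤ S₁.card * (k - 1) + S₂.card * (k - 1) := by
        rw [← add_mul]
        exact Nat.mul_le_mul_right _ hcard
    _ ≤ _ := by omega

/-- Outside `X` the absorbers of a book are vertex-disjoint, so their contributions add up to
at most `2 |V|`. -/
theorem card_mul_le_of_book {ι : Type*} [Fintype ι] (A : ι → Absorber G k X)
    (hdisj : ∀ j j', j ≠ j' → Disjoint (A j).verts (A j').verts)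
    {E : Finset (Finset ℕ)} {V : Finset ℕ} (hE : E ⊆ univ.biUnion fun j => (A j).edgeSet)
    (hEV : ∀ e ∈ E, e ⊆ V) :
    E.card * (k - 1) ≤ 2 * V.card + 2 * Fintype.card ι * X.card := by
  set S : ι → Finset (Finset ℕ) := fun j => E.filter (· ∈ (A j).edgeSet)
  set U : ι → Finset ℕ := fun j => ((S j).biUnion id) \ X
  have hU : ∀ j, U j ⊆ (A j).verts ∩ V := by
    intro j x hx
    obtain ⟨hx, hxX⟩ := mem_sdiff.mp hx
    obtain ⟨e, he, hxe⟩ := mem_biUnion.mp hx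
    obtain ⟨heE, heA⟩ := mem_filter.mp he
    have := (A j).subset_verts_union_of_mem_edgeSet heA hxe
    exact mem_inter.mpr ⟨(mem_union.mp this).resolve_right hxX, hEV e heE hxe⟩
  have hUdisj : ((univ : Finset ι) : Set ι).PairwiseDisjoint U := fun j _ j' _ hne =>
    (hdisj j j' hne).mono ((hU j).trans inter_subset_left) ((hU j').trans inter_subset_left)
  have hcard : E.card ≤ ∑ j, (S j).card := by
    refine (card_le_card fun e he => ?_).trans card_biUnion_le
    obtain ⟨j, -, hj⟩ := mem_biUnion.mp (hE he)
    exact mem_biUnion.mpr ⟨j, mem_univ j, mem_filter.mpr ⟨he, hj⟩⟩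
  calc E.card * (k - 1) ≤ ∑ j, (S j).card * (k - 1) := by
        rw [← sum_mul]
        gcongr
    _ ≤ ∑ j, (2 * (U j).card + 2 * X.card) :=
        sum_le_sum fun j _ => (A j).card_mul_le fun _ he => (mem_filter.mp he).2
    _ = 2 * (univ.biUnion U).card + 2 * Fintype.card ι * X.card := by
        rw [sum_add_distrib, ← mul_sum, card_biUnion hUdisj, sum_const, card_univ, smul_eq_mul]
        ring
    _ ≤ 2 * V.card + 2 * Fintype.card ι * X.card := by
        gcongr
        exact biUnion_subset.mpr fun j _ => (hU j).trans inter_subset_right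

end Absorber

section BergePath

variable {F F' : Finset (Finset ℕ)} {es : List (Finset ℕ)} {vs : List ℕ}

def IsBergePath (F : Finset (Finset ℕ)) (es : List (Finset ℕ)) (vs : List ℕ) : Prop :=
  es.Nodup ∧ (∀ e ∈ es, e ∈ F) ∧ vs.Nodup ∧ vs.length + 1 = es.length ∧
    ∀ i < vs.length, vs.getD i 0 ∈ es.getD i ∅ ∧ vs.getD i 0 ∈ es.getD (i + 1) ∅

namespace IsBergePath

theorem length_le_card (h : IsBergePath F es vs) : es.length ≤ F.card := by
  rw [← List.toFinset_card_of_nodup h.1]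
  exact card_le_card fun e he => h.2.1 e (List.mem_toFinset.mp he)

theorem of_forall_mem (h : IsBergePath F es vs) (hF' : ∀ e ∈ es, e ∈ F') :
    IsBergePath F' es vs :=
  ⟨h.1, hF', h.2.2⟩

theorem drop (h : IsBergePath F es vs) {a : ℕ} (ha : a ≤ vs.length) :
    IsBergePath F (es.drop a) (vs.drop a) := by
  obtain ⟨hnd, hmem, hvnd, hlen, hlink⟩ := h
  refine ⟨hnd.sublist (List.drop_sublist _ _), fun e he => hmem e (List.mem_of_mem_drop he),
    hvnd.sublist (List.drop_sublist _ _), by simp only [List.length_drop]; omega,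
    fun i hi => ?_⟩
  simp only [List.length_drop] at hi
  simpa [List.getD_eq_getElem?_getD, add_assoc] using hlink (a + i) (by omega)

theorem take (h : IsBergePath F es vs) (d : ℕ) :
    IsBergePath F (es.take (d + 1)) (vs.take d) := by
  obtain ⟨hnd, hmem, hvnd, hlen, hlink⟩ := h
  refine ⟨hnd.sublist (List.take_sublist _ _), fun e he => hmem e (List.mem_of_mem_take he),
    hvnd.sublist (List.take_sublist _ _), by simp only [List.length_take]; omega,
    fun i hi => ?_⟩
  simp only [List.length_take] at hi
  have hi' : i < d := by omega
  have hi'' : i + 1 < d + 1 := by omega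
  simpa [List.getD_eq_getElem?_getD, hi', hi'', Nat.lt_succ_of_lt hi'] using hlink i (by omega)

theorem concat (h : IsBergePath F es vs) {f : Finset ℕ} {w : ℕ} (hf : f ∈ F) (hfes : f ∉ es)
    (hw : w ∉ vs) (hwl : w ∈ es.getD (es.length - 1) ∅) (hwf : w ∈ f) :
    IsBergePath F (es ++ [f]) (vs ++ [w]) := by
  obtain ⟨hnd, hmem, hvnd, hlen, hlink⟩ := h
  refine ⟨by simpa using hnd.concat hfes, ?_, by simpa using hvnd.concat hw, by simp [hlen],
    fun i hi => ?_⟩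
  · simpa [or_imp, forall_and] using ⟨hmem, hf⟩
  simp only [List.length_append, List.length_singleton] at hi
  rcases Nat.lt_or_ge i vs.length with hi | hi
  · rw [List.getD_append _ _ _ _ hi, List.getD_append _ _ _ _ (by omega),
      List.getD_append _ _ _ _ (by omega)]
    exact hlink i hi
  · obtain rfl : i = vs.length := by omega
    rw [List.getD_append_right _ _ _ _ le_rfl, List.getD_append _ _ _ _ (by omega), hlen,
      List.getD_append_right _ _ _ _ le_rfl]
    simpa [show vs.length = es.length - 1 by omega] using ⟨hwl, hwf⟩

theorem isBergeCycleIn (h : IsBergePath F es vs) (hlen : 2 ≤ es.length) {w : ℕ} (hw : w ∉ vs)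
    (hlast : w ∈ es.getD (es.length - 1) ∅) (hhead : w ∈ es.getD 0 ∅) : IsBergeCycleIn F es := by
  obtain ⟨hnd, hmem, hvnd, hvlen, hlink⟩ := h
  refine ⟨hlen, hnd, hmem, vs ++ [w], by simpa using hvnd.concat hw, by simp [hvlen],
    fun i hi => ?_⟩
  rcases Nat.lt_or_ge i vs.length with hi' | hi'
  · rw [List.getD_append _ _ _ _ hi', Nat.mod_eq_of_lt (by omega)]
    exact hlink i hi'
  · obtain rfl : i = es.length - 1 := by omega
    rw [List.getD_append_right _ _ _ _ hi', Nat.sub_add_cancel (by omega), Nat.mod_self]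
    simpa [show es.length - 1 - vs.length = 0 by omega] using ⟨hlast, hhead⟩

end IsBergePath

namespace IsBergeCycleIn

theorem of_forall_mem {es : List (Finset ℕ)} (h : IsBergeCycleIn F es) (hF' : ∀ e ∈ es, e ∈ F') :
    IsBergeCycleIn F' es :=
  ⟨h.1, h.2.1, hF', h.2.2.2⟩

theorem exists_isBergePath {es : List (Finset ℕ)} (h : IsBergeCycleIn F es) :
    ∃ vs w, IsBergePath F es vs ∧ w ∉ vs ∧ w ∈ es.getD (es.length - 1) ∅ ∧ w ∈ es.getD 0 ∅ := by
  obtain ⟨h2, hnd, hmem, vs, hvnd, hlen, hlink⟩ := h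
  have hlast := hlink (es.length - 1) (by omega)
  rw [Nat.sub_add_cancel (by omega), Nat.mod_self] at hlast
  refine ⟨vs.take (es.length - 1), vs.getD (es.length - 1) 0,
    ⟨hnd, hmem, hvnd.sublist (List.take_sublist _ _), by simp only [List.length_take]; omega,
      fun i hi => ?_⟩, hvnd.getD_notMem_take (by omega) le_rfl, hlast⟩
  simp only [List.length_take] at hi
  have hi' : i < es.length - 1 := by omega
  have := hlink i (by omega)
  rw [Nat.mod_eq_of_lt (by omega)] at this
  simpa [List.getD_eq_getElem?_getD, hi'] using this

theorem rotate {es : List (Finset ℕ)} (h : IsBergeCycleIn F es) (n : ℕ) :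
    IsBergeCycleIn F (es.rotate n) := by
  obtain ⟨h2, hnd, hmem, vs, hvnd, hlen, hlink⟩ := h
  refine ⟨by simpa using h2, List.nodup_rotate.mpr hnd,
    fun e he => hmem e (List.mem_rotate.mp he), vs.rotate n, List.nodup_rotate.mpr hvnd,
    by simp [hlen], fun i hi => ?_⟩
  rw [List.length_rotate] at hi ⊢
  have hpos : 0 < es.length := by omega
  rw [List.getD_rotate (show i < vs.length by omega), List.getD_rotate hi,
    List.getD_rotate (Nat.mod_lt _ hpos), hlen, Nat.mod_add_mod, add_right_comm]
  simpa [Nat.mod_add_mod] using hlink _ (Nat.mod_lt (i + n) hpos)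

end IsBergeCycleIn

end BergePath

theorem exists_first_change_of_ne {α : Type*} (f : ℕ → α) {m : ℕ} (h : f 0 ≠ f m) :
    ∃ d < m, f d ≠ f (d + 1) ∧ ∀ i ≤ d, f i = f 0 := by
  have hm : m - 1 + 1 = m :=
    Nat.sub_add_cancel (Nat.one_le_iff_ne_zero.mpr (by rintro rfl; exact h rfl))
  have hlast : f (m - 1 + 1) ≠ f 0 := hm ▸ h.symm
  have hex : ∃ d, f (d + 1) ≠ f 0 := ⟨m - 1, hlast⟩
  have hconst : ∀ i ≤ Nat.find hex, f i = f 0 := by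
    rintro (_ | i) hi
    · rfl
    · exact not_not.mp (Nat.find_min hex (by omega))
  refine ⟨Nat.find hex, ?_, ?_, hconst⟩
  · have : Nat.find hex ≤ m - 1 := Nat.find_le hlast
    omega
  · rw [hconst _ le_rfl]
    exact (Nat.find_spec hex).symm

section Girth

variable {F F' : Finset (Finset ℕ)} {K : ℕ}

theorem IsBergeCycleIn.length_le_card {es : List (Finset ℕ)} (h : IsBergeCycleIn F es) :
    es.length ≤ F.card := by
  rw [← List.toFinset_card_of_nodup h.2.1]
  exact card_le_card fun e he => h.2.2.1 e (List.mem_toFinset.mp he)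

theorem GirthAtLeast.anti (h : GirthAtLeast F K) (hsub : F' ⊆ F) : GirthAtLeast F' K :=
  fun es hes => h es (hes.of_forall_mem fun e he => hsub (hes.2.2.1 e he))

theorem GirthAtLeast.bergeAcyclic (h : GirthAtLeast F K) (hF : F.card < K) : BergeAcyclic F :=
  fun es hes => by
    have := h es hes
    have := hes.length_le_card
    omega

/-- A Berge cycle whose two end edges have different colours under `J` can be shortcut through
`X`: follow it up to the first colour change and return through the edge `X`. -/
theorem IsBergeCycleIn.exists_shortcut {ι : Type*} (ES : ι → Finset (Finset ℕ))
    (J : Finset ℕ → ι) {X : Finset ℕ} {es : List (Finset ℕ)} (h : IsBergeCycleIn F es)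
    (hJ : ∀ e ∈ es, e ∈ ES (J e)) (hsep : ∀ e ∈ es, ∀ f ∈ es, J e ≠ J f → e ∩ f ⊆ X)
    (hX : X ∉ es) (hends : J (es.getD (es.length - 1) ∅) ≠ J (es.getD 0 ∅)) :
    ∃ es', IsBergeCycleIn (insert X (ES (J (es.getD 0 ∅)))) es' ∧ es'.length ≤ es.length := by
  obtain ⟨vs, w, hp, hw, hwl, hw0⟩ := h.exists_isBergePath
  have hvlen : vs.length + 1 = es.length := hp.2.2.2.1
  have hmem : ∀ i < es.length, es.getD i ∅ ∈ es := fun i hi => List.getD_mem_of_lt hi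
  obtain ⟨d, hd, hchange, hconst⟩ :=
    exists_first_change_of_ne (fun i => J (es.getD i ∅)) hends.symm
  have hvd := hp.2.2.2.2 d (by omega)
  have hvX : vs.getD d 0 ∈ X :=
    hsep _ (hmem d (by omega)) _ (hmem (d + 1) (by omega)) hchange (mem_inter.mpr hvd)
  have hwX : w ∈ X :=
    hsep _ (hmem _ (by omega)) _ (hmem 0 (by omega)) hends (mem_inter.mpr ⟨hwl, hw0⟩)
  have hprefix : IsBergePath (insert X (ES (J (es.getD 0 ∅)))) (es.take (d + 1)) (vs.take d) := by
    refine (hp.take d).of_forall_mem fun e he => ?_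
    obtain ⟨i, hi, rfl⟩ := List.mem_take_iff_getElem.mp he
    rw [← List.getD_eq_getElem _ ∅, ← hconst i (by omega)]
    exact mem_insert_of_mem (hJ _ (hmem i (by omega)))
  have hvlast : vs.getD d 0 ∈ (es.take (d + 1)).getD ((es.take (d + 1)).length - 1) ∅ := by
    have : d < es.length := by omega
    simpa [List.getD_eq_getElem?_getD, this] using hvd.1
  have hpath := hprefix.concat (mem_insert_self _ _) (fun h => hX (List.mem_of_mem_take h))
    (hp.2.2.1.getD_notMem_take (by omega) le_rfl) hvlast hvX
  have hwnot : w ∉ vs.take d ++ [vs.getD d 0] := by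
    simp only [List.mem_append, List.mem_singleton, not_or]
    exact ⟨fun h => hw (List.mem_of_mem_take h),
      by rintro rfl; exact hw (List.getD_mem_of_lt (by omega))⟩
  refine ⟨_, hpath.isBergeCycleIn (by simp; omega) hwnot (by simpa using hwX)
    (by
      rw [List.getD_append _ _ _ _ (by simp; omega)]
      simpa [List.getD_eq_getElem?_getD] using hw0),
    by simp; omega⟩

theorem girthAtLeast_biUnion_of_inter_subset {ι : Type*} [Fintype ι] {X : Finset ℕ}
    (ES : ι → Finset (Finset ℕ)) (hsep : ∀ i j, i ≠ j → ∀ e ∈ ES i, ∀ f ∈ ES j, e ∩ f ⊆ X)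
    (hX : X ∉ univ.biUnion ES) (hgirth : ∀ i, GirthAtLeast (insert X (ES i)) K) :
    GirthAtLeast (univ.biUnion ES) K := by
  intro es hes
  have hℓ := hes.1
  have hmem : ∀ e ∈ es, ∃ i, e ∈ ES i := fun e he => by simpa using hes.2.2.1 e he
  obtain ⟨i₀, -⟩ := hmem _ (List.getD_mem_of_lt (d := ∅) (i := 0) (by omega))
  have : Nonempty ι := ⟨i₀⟩
  choose! J hJ using hmem
  have hsep' : ∀ e ∈ es, ∀ f ∈ es, J e ≠ J f → e ∩ f ⊆ X :=
    fun e he f hf hne => hsep _ _ hne e (hJ e he) f (hJ f hf)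
  have hX' : X ∉ es := fun h => hX (hes.2.2.1 X h)
  by_cases hconst : ∀ e ∈ es, J e = J (es.getD 0 ∅)
  · exact hgirth (J (es.getD 0 ∅)) es
      (hes.of_forall_mem fun e he => mem_insert_of_mem (hconst e he ▸ hJ e he))
  push Not at hconst
  obtain ⟨e, he, hne⟩ := hconst
  obtain ⟨m, hm, rfl⟩ := List.mem_iff_getElem.mp he
  rw [← List.getD_eq_getElem _ ∅] at hne
  obtain ⟨r, hr, hchange, -⟩ := exists_first_change_of_ne (fun i => J (es.getD i ∅)) hne.symm
  have hhead : (es.rotate (r + 1)).getD 0 ∅ = es.getD (r + 1) ∅ := by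
    rw [List.getD_rotate (by omega), zero_add, Nat.mod_eq_of_lt (by omega)]
  have hlast : (es.rotate (r + 1)).getD ((es.rotate (r + 1)).length - 1) ∅ = es.getD r ∅ := by
    rw [List.length_rotate, List.getD_rotate (by omega),
      show es.length - 1 + (r + 1) = r + es.length by omega, Nat.add_mod_right,
      Nat.mod_eq_of_lt (by omega)]
  obtain ⟨es', hc, hlen⟩ := (hes.rotate (r + 1)).exists_shortcut ES J
    (fun e he => hJ e (List.mem_rotate.mp he))
    (fun e he f hf => hsep' e (List.mem_rotate.mp he) f (List.mem_rotate.mp hf))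
    (fun h => hX' (List.mem_rotate.mp h)) (by rw [hhead, hlast]; exact hchange)
  exact (hgirth _ es' hc).trans (hlen.trans_eq (List.length_rotate _ _))

end Girth

theorem Absorber.girthAtLeast_of_book {G : HGraph} {k : ℕ} {X : Finset ℕ} {ι : Type*} [Fintype ι]
    {K : ℕ} (A : ι → Absorber G k X) (hsparse : ∀ j, (A j).KSparse K)
    (hdisj : ∀ j j', j ≠ j' → Disjoint (A j).verts (A j').verts)
    (hX : X ∉ univ.biUnion fun j => (A j).edgeSet) :
    GirthAtLeast (univ.biUnion fun j => (A j).edgeSet) K := by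
  refine girthAtLeast_biUnion_of_inter_subset _ (fun i j hij e he f hf x hx => ?_) hX hsparse
  obtain ⟨hxe, hxf⟩ := mem_inter.mp hx
  by_contra hxX
  have hxi := (A i).subset_verts_union_of_mem_edgeSet he hxe
  have hxj := (A j).subset_verts_union_of_mem_edgeSet hf hxf
  rw [mem_union, or_iff_left hxX] at hxi hxj
  exact disjoint_left.mp (hdisj i j hij) hxi hxj

section Forest

variable {F F' : Finset (Finset ℕ)}

theorem BergeAcyclic.anti (h : BergeAcyclic F) (hsub : F' ⊆ F) : BergeAcyclic F' :=
  fun es hes => h es (hes.of_forall_mem fun e he => hsub (hes.2.2.1 e he))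

theorem exists_longest_isBergePath (hne : F.Nonempty) :
    ∃ es vs, IsBergePath F es vs ∧ ∀ es' vs', IsBergePath F es' vs' → es'.length ≤ es.length := by
  classical
  let P : ℕ → Prop := fun n => ∃ es vs, IsBergePath F es vs ∧ es.length = n
  obtain ⟨e, he⟩ := hne
  have hP1 : P 1 :=
    ⟨[e], [], ⟨List.nodup_singleton e, by simpa using he, List.nodup_nil, rfl, by simp⟩, rfl⟩
  obtain ⟨es, vs, hp, hlen⟩ := Nat.findGreatest_spec (card_pos.mpr ⟨e, he⟩) hP1
  exact ⟨es, vs, hp, fun es' vs' hp' =>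
    hlen ▸ Nat.le_findGreatest hp'.length_le_card ⟨es', vs', hp', rfl⟩⟩

/-- The last edge `e` of a longest Berge path meets the other edges at most in the last
connecting vertex: any other common vertex `w` either closes a Berge cycle with the path or
extends it. -/
theorem BergeAcyclic.exists_pendant (hF : BergeAcyclic F) (hne : F.Nonempty) :
    ∃ e ∈ F, ((F.erase e).biUnion id ∩ e).card ≤ 1 := by
  obtain ⟨es, vs, hp, hmax⟩ := exists_longest_isBergePath hne
  have hvlen : vs.length + 1 = es.length := hp.2.2.2.1
  have hlast : ∀ a < es.length,
      (es.drop a).getD ((es.drop a).length - 1) ∅ = es.getD (es.length - 1) ∅ := by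
    intro a ha
    rw [List.getD_drop, List.length_drop, show a + (es.length - a - 1) = es.length - 1 by omega]
  set e := es.getD (es.length - 1) ∅
  refine ⟨e, hp.2.1 _ (List.getD_mem_of_lt (by omega)), ?_⟩
  suffices (F.erase e).biUnion id ∩ e ⊆ {vs.getD (vs.length - 1) 0} from
    (card_le_card this).trans (card_singleton _).le
  intro w hw
  obtain ⟨hwF, hwe⟩ := mem_inter.mp hw
  obtain ⟨f, hf, hwf⟩ := mem_biUnion.mp hwF
  obtain ⟨hfe, hfF⟩ := mem_erase.mp hf
  rw [mem_singleton]
  by_contra hwl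
  by_cases hwvs : w ∈ vs
  · obtain ⟨j, hj, rfl⟩ := List.mem_iff_getElem.mp hwvs
    rw [← List.getD_eq_getElem _ 0] at hwl hwe
    have hj' : j ≠ vs.length - 1 := fun h => hwl (h ▸ rfl)
    refine hF _ ((hp.drop (a := j + 1) (by omega)).isBergeCycleIn (by simp; omega)
      (hp.2.2.1.getD_notMem_drop (Nat.lt_succ_self j)) (by rwa [hlast _ (by omega)]) ?_)
    rw [List.getD_drop, add_zero]
    exact (hp.2.2.2.2 j hj).2
  by_cases hfes : f ∈ es
  · obtain ⟨j, hj, rfl⟩ := List.mem_iff_getElem.mp hfes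
    rw [← List.getD_eq_getElem _ ∅] at hfe hwf
    have hj' : j ≠ es.length - 1 := fun h => hfe (h ▸ rfl)
    refine hF _ ((hp.drop (a := j) (by omega)).isBergeCycleIn (by simp; omega)
      (fun h => hwvs (List.mem_of_mem_drop h)) (by rwa [hlast _ (by omega)]) ?_)
    rwa [List.getD_drop, add_zero]
  · have := hmax _ _ (hp.concat hfF hfes hwvs hwe hwf)
    simp at this

theorem BergeAcyclic.card_mul_add_one_le {k : ℕ} (hk : 0 < k) (hF : BergeAcyclic F)
    (hcard : ∀ e ∈ F, e.card = k) (hne : F.Nonempty) :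
    F.card * (k - 1) + 1 ≤ (F.biUnion id).card := by
  induction F using Finset.strongInduction with
  | H F ih =>
  obtain ⟨e, he, hpend⟩ := hF.exists_pendant hne
  set B := (F.erase e).biUnion id
  have hunion : (F.biUnion id).card = (e \ B).card + B.card := by
    rw [card_sdiff_add_card, ← insert_erase he, biUnion_insert, id]
  have hnew : k - 1 ≤ (e \ B).card := by
    have := card_sdiff_add_card_inter e B
    rw [inter_comm, hcard e he] at this
    omega
  have hF' := card_erase_add_one he
  rcases (F.erase e).eq_empty_or_nonempty with h0 | h0
  · rw [hunion, show B = ∅ by simp [B, h0], sdiff_empty, hcard e he, ← hF', h0]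
    simp only [card_empty]
    omega
  · have : (F.erase e).card * (k - 1) + 1 ≤ B.card := ih _ (erase_ssubset he)
      (hF.anti (erase_subset e F))
      (fun f hf => hcard f (mem_of_mem_erase hf)) h0
    rw [hunion, ← hF', add_one_mul]
    omega

end Forest

section Density

variable {a v k : ℕ} {γ : ℝ}

theorem div_le_of_card_mul_add_one_le (hk : 2 ≤ k) (hγ : 0 ≤ γ) (hvk : k < v)
    (h : a * (k - 1) + 1 ≤ v) : ((a : ℝ) - 1) / ((v : ℝ) - k) ≤ 2 / ((k : ℝ) - 1) + γ := by
  have hk1 : (0 : ℝ) < k - 1 := by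
    have : (2 : ℝ) ≤ k := by exact_mod_cast hk
    linarith
  have hvk' : (0 : ℝ) < v - k := sub_pos.mpr (by exact_mod_cast hvk)
  have h' : (a : ℝ) * (k - 1) + 1 ≤ v := by
    have := (Nat.cast_le (α := ℝ)).mpr h
    push_cast [Nat.cast_sub (show 1 ≤ k by omega)] at this
    exact this
  calc ((a : ℝ) - 1) / ((v : ℝ) - k) ≤ 1 / ((k : ℝ) - 1) := by
        rw [div_le_div_iff₀ hvk' hk1]
        linarith
    _ ≤ 2 / ((k : ℝ) - 1) + γ := by
        have : 1 / ((k : ℝ) - 1) ≤ 2 / ((k : ℝ) - 1) := by gcongr; norm_num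
        linarith

theorem div_le_of_card_mul_le {T : ℕ} (hk : 2 ≤ k) (hγ : 0 < γ) (hvk : k < v)
    (h : a * (k - 1) ≤ 2 * v + 2 * T * (k - 1))
    (ha : (2 / ((k : ℝ) - 1) + γ) * (2 * T * ((k : ℝ) - 1) + 2 * k) / (γ * ((k : ℝ) - 1)) ≤ a) :
    ((a : ℝ) - 1) / ((v : ℝ) - k) ≤ 2 / ((k : ℝ) - 1) + γ := by
  set c := 2 / ((k : ℝ) - 1) + γ
  have hk1 : (0 : ℝ) < k - 1 := by
    have : (2 : ℝ) ≤ k := by exact_mod_cast hk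
    linarith
  have hvk' : (0 : ℝ) < v - k := sub_pos.mpr (by exact_mod_cast hvk)
  have hc : 0 < c := by positivity
  have hck : c * ((k : ℝ) - 1) = 2 + γ * ((k : ℝ) - 1) := by
    simp only [c, add_mul, div_mul_cancel₀ _ hk1.ne']
  have h' : (a : ℝ) * (k - 1) ≤ 2 * v + 2 * T * (k - 1) := by
    have := (Nat.cast_le (α := ℝ)).mpr h
    push_cast [Nat.cast_sub (show 1 ≤ k by omega)] at this
    exact this
  rw [div_le_iff₀ (by positivity)] at ha
  rw [div_le_iff₀ hvk']
  -- multiplying `h'` by `c` and using `c (k - 1) = 2 + γ (k - 1)` gives `2 c (v - k) ≥ 2 a`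
  nlinarith [mul_le_mul_of_nonneg_left h' hc.le]

end Density

theorem book_of_sparse_absorbers_density_general (k T : ℕ) (hk : 3 ≤ k)
    (γ : ℝ) (hγ : 0 < γ) :
    ∃ K₀ : ℕ, ∀ K : ℕ, K₀ ≤ K →
      ∀ (H : HGraph) (X : Finset ℕ) (A : Fin T → Absorber H k X),
        X.card = k - 1 → H.IsUniform k →
        (∀ j, (A j).KSparse K) →
        (∀ j j', j ≠ j' → Disjoint ((A j).verts) ((A j').verts)) →
        H.verts = X ∪ Finset.univ.biUnion (fun j => (A j).verts) →
        H.edges = Finset.univ.biUnion (fun j => (A j).edgeSet) →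
        kDensityLE H k (2 / ((k : ℝ) - 1) + γ) := by
  refine ⟨⌈(2 / ((k : ℝ) - 1) + γ) * (2 * T * ((k : ℝ) - 1) + 2 * k) / (γ * ((k : ℝ) - 1))⌉₊,
    fun K hK H X A hX hunif hsparse hdisj _ hedges V' _ E' hE' hEV hVk => ?_⟩
  have hXE : X ∉ H.edges := fun h => by
    have := (hunif X h).2
    omega
  rw [hedges] at hE' hXE
  rcases lt_or_ge E'.card K with hsmall | hlarge
  · refine div_le_of_card_mul_add_one_le (by omega) hγ.le hVk ?_
    rcases E'.eq_empty_or_nonempty with rfl | hne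
    · simp only [card_empty, zero_mul, zero_add]
      omega
    have hacyc := ((Absorber.girthAtLeast_of_book A hsparse hdisj hXE).anti hE').bergeAcyclic hsmall
    exact (hacyc.card_mul_add_one_le (by omega) (fun e he => (hunif e (hedges ▸ hE' he)).2)
      hne).trans (card_le_card (biUnion_subset.mpr hEV))
  · have hcount := Absorber.card_mul_le_of_book A hdisj hE' hEV
    rw [Fintype.card_fin, hX] at hcount
    exact div_le_of_card_mul_le (by omega) hγ hVk hcount
      ((Nat.le_ceil _).trans (by exact_mod_cast hK.trans hlarge))

/-- Books of sparse absorbers have small k-density. -/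
theorem book_of_sparse_absorbers_density (k T : ℕ) (hk : 3 ≤ k) (hT : 1 ≤ T)
    (γ : ℝ) (hγ : 0 < γ) :
    ∃ K₀ : ℕ, ∀ K : ℕ, K₀ ≤ K →
      ∀ (H : HGraph) (X : Finset ℕ) (A : Fin T → Absorber H k X),
        X.card = k - 1 → H.IsUniform k →
        (∀ j, (A j).KSparse K) →
        (∀ j j', j ≠ j' → Disjoint ((A j).verts) ((A j').verts)) →
        H.verts = X ∪ Finset.univ.biUnion (fun j => (A j).verts) →
        H.edges = Finset.univ.biUnion (fun j => (A j).edgeSet) →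
        kDensityLE H k (2 / ((k : ℝ) - 1) + γ) :=
  book_of_sparse_absorbers_density_general k T hk γ hγ
end

section
/- Let k ≥ 3 be an integer. (i) If F is a Berge acyclic k-graph with more than k vertices, then m_k(F) ≤ 1/(k−1). (ii) If K ≥ 3 and A is a K-sparse k-uniform absorber whose associated k-graph (the k-graph whose edges are the edges of its paths) has more than k vertices, then m_k of that k-graph is at most 2/(k−1) + 1/(K(k−1)−k). -/
/-!
Call an edge of a hypergraph a leaf if it meets the union of the other edges in at most one
vertex. Every nonempty subfamily of a Berge acyclic hypergraph has a leaf (the last edge of a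
longest Berge path), and so does every nonempty family of edges of vertex-disjoint loose paths
(the last of its edges along one of the paths). Removing leaves one at a time shows that `e`
such `k`-edges span at least `(k - 1) e + 1` vertices, which is (i).

For (ii), the edges of an absorber split into the edges of its two path systems, so `e` of them
span `v` vertices with `(k - 1) e + 2 ≤ 2 v`. If they contain a Berge cycle, take a shortest
one, of length `ℓ ≥ K`: all but its last edge form an acyclic family, and the last edge meets them
only in its two linking vertices (any further common vertex would close a shorter cycle), so it spans
at least `ℓ (k - 1) ≥ K (k - 1)` vertices. The two bounds give the density bound; without a Berge
cycle, (i) already gives `1 / (k - 1)`.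
-/

open Finset

attribute [local instance] Classical.propDecidable

theorem List.getD_mem_of_lt_s10 {α : Type*} {l : List α} {d : α} {i : ℕ} (h : i < l.length) :
    l.getD i d ∈ l := by
  rw [List.getD_eq_getElem _ _ h]
  exact List.getElem_mem _

theorem List.Nodup.length_le_card_of_forall_mem {α : Type*} {l : List α} {s : Finset α}
    (hnd : l.Nodup) (hmem : ∀ a ∈ l, a ∈ s) : l.length ≤ s.card := by
  simpa using (hnd.subperm fun a ha => Finset.mem_toList.mpr (hmem a ha)).length_le

section Berge

variable {H H' : Finset (Finset ℕ)} {es : List (Finset ℕ)} {vs : List ℕ} {K : ℕ}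

theorem IsBergeCycleIn.mono (h : H ⊆ H') (hc : IsBergeCycleIn H es) : IsBergeCycleIn H' es :=
  ⟨hc.1, hc.2.1, fun e he => h (hc.2.2.1 e he), hc.2.2.2⟩

theorem BergeAcyclic.mono (h : H ⊆ H') (hac : BergeAcyclic H') : BergeAcyclic H :=
  fun es hc => hac es (hc.mono h)

theorem GirthAtLeast.mono (h : H ⊆ H') (hg : GirthAtLeast H' K) : GirthAtLeast H K :=
  fun es hc => hg es (hc.mono h)

theorem GirthAtLeast.card_inter_le_one (hK : 3 ≤ K) (hg : GirthAtLeast H K) {e f : Finset ℕ}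
    (he : e ∈ H) (hf : f ∈ H) (hef : e ≠ f) : (e ∩ f).card ≤ 1 := by
  by_contra! h
  obtain ⟨u, hu, v, hv, huv⟩ := Finset.one_lt_card.mp h
  rw [Finset.mem_inter] at hu hv
  have hcyc : IsBergeCycleIn H [e, f] := by
    refine ⟨by simp, by simp [hef], by simp [he, hf], [u, v], by simp [huv], rfl, ?_⟩
    intro i hi
    simp only [List.length_cons, List.length_nil] at hi
    interval_cases i <;> simp [hu.1, hu.2, hv.1, hv.2]
  have := hg _ hcyc
  simp only [List.length_cons, List.length_nil] at this
  omega

structure IsBergePathIn (H : Finset (Finset ℕ)) (es : List (Finset ℕ)) (vs : List ℕ) : Prop where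
  nodup_edges : es.Nodup
  mem : ∀ e ∈ es, e ∈ H
  nodup_verts : vs.Nodup
  length_eq : vs.length + 1 = es.length
  adj : ∀ i < vs.length, vs.getD i 0 ∈ es.getD i ∅ ∧ vs.getD i 0 ∈ es.getD (i + 1) ∅

theorem IsBergeCycleIn.exists_isBergePathIn (hc : IsBergeCycleIn H es) :
    ∃ vs v, IsBergePathIn H es vs ∧ v ∈ es.getD (es.length - 1) ∅ ∧ v ∈ es.getD 0 ∅ := by
  obtain ⟨hlen, hnd, hmem, vs, hvnd, hvlen, hadj⟩ := hc
  refine ⟨vs.dropLast, vs.getD (es.length - 1) 0,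
    ⟨hnd, hmem, hvnd.sublist (List.dropLast_sublist _), by rw [List.length_dropLast]; omega,
      fun i hi => ?_⟩, ?_⟩
  · rw [List.length_dropLast] at hi
    have := hadj i (by omega)
    rw [Nat.mod_eq_of_lt (by omega)] at this
    grind
  · have := hadj (es.length - 1) (by omega)
    rwa [Nat.sub_add_cancel (by omega), Nat.mod_self] at this

theorem IsBergePathIn.isBergeCycleIn_drop (hp : IsBergePathIn H es vs) {s u : ℕ}
    (hs : s + 2 ≤ es.length) (hus : u ∈ es.getD s ∅) (hul : u ∈ es.getD (es.length - 1) ∅)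
    (hu : u ∉ vs.drop s) : IsBergeCycleIn H (es.drop s) := by
  have hlen := hp.length_eq
  refine ⟨by rw [List.length_drop]; omega, hp.nodup_edges.sublist (List.drop_sublist _ _),
    fun e he => hp.mem e (List.mem_of_mem_drop he), vs.drop s ++ [u],
    List.nodup_append.mpr ⟨hp.nodup_verts.sublist (List.drop_sublist _ _), by simp,
      fun a ha b hb hab => hu (by simp_all)⟩,
    by simp only [List.length_append, List.length_drop, List.length_singleton]; omega,
    fun i hi => ?_⟩
  simp only [List.length_drop] at hi
  rcases Nat.lt_or_ge (i + 1) (es.length - s) with hi' | hi'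
  · have := hp.adj (s + i) (by omega)
    rw [Nat.mod_eq_of_lt (by simpa using hi')]
    grind
  · have hi : i + 1 = es.length - s := by omega
    rw [List.length_drop, hi, Nat.mod_self]
    grind

theorem IsBergePathIn.exists_isBergeCycleIn_drop (hp : IsBergePathIn H es vs) {j u : ℕ}
    (hj : j + 1 < es.length) (huj : u ∈ es.getD j ∅) (hul : u ∈ es.getD (es.length - 1) ∅)
    (hu : u ≠ vs.getD (vs.length - 1) 0) :
    ∃ s, s + 2 ≤ es.length ∧ u ∈ es.getD s ∅ ∧ IsBergeCycleIn H (es.drop s) := by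
  have hlen := hp.length_eq
  by_cases huvs : u ∈ vs
  · -- `u = v_m` also lies in the edge after `v_m`, and occurs nowhere later in `vs`
    obtain ⟨m, hm, rfl⟩ := List.getElem_of_mem huvs
    have hm' : m + 1 < vs.length := by
      by_contra
      exact hu (by rw [List.getD_eq_getElem _ _ (by omega)]; congr; omega)
    have hum := (hp.adj m hm).2
    rw [List.getD_eq_getElem _ _ hm] at hum
    refine ⟨m + 1, by omega, hum, hp.isBergeCycleIn_drop (by omega) hum hul ?_⟩
    have hnd := hp.nodup_verts
    rw [← List.take_append_drop (m + 1) vs] at hnd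
    exact List.disjoint_of_nodup_append hnd
      (List.mem_take_iff_getElem.mpr ⟨m, by omega, rfl⟩)
  · exact ⟨j, by omega, huj, hp.isBergeCycleIn_drop (by omega) huj hul
      fun h => huvs (List.mem_of_mem_drop h)⟩

theorem IsBergePathIn.append (hp : IsBergePathIn H es vs) {f : Finset ℕ} {u : ℕ} (hf : f ∈ H)
    (hfes : f ∉ es) (huvs : u ∉ vs) (hul : u ∈ es.getD (es.length - 1) ∅) (huf : u ∈ f) :
    IsBergePathIn H (es ++ [f]) (vs ++ [u]) := by
  have hlen := hp.length_eq
  refine ⟨List.nodup_append.mpr ⟨hp.nodup_edges, by simp, fun a ha b hb hab => hfes (by simp_all)⟩,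
    fun e he => ?_, List.nodup_append.mpr ⟨hp.nodup_verts, by simp,
      fun a ha b hb hab => huvs (by simp_all)⟩, by simpa using hlen, fun i hi => ?_⟩
  · rcases List.mem_append.mp he with he | he
    · exact hp.mem e he
    · simp_all
  · simp only [List.length_append, List.length_singleton] at hi
    rcases Nat.lt_or_ge i vs.length with hi' | hi'
    · have := hp.adj i hi'
      grind
    · have hi : i = vs.length := by omega
      subst hi
      grind

end Berge

section Counting

variable {H : Finset (Finset ℕ)} {k : ℕ}

def IsLeaf (H : Finset (Finset ℕ)) (e : Finset ℕ) : Prop :=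
  (e ∩ (H.erase e).biUnion id).card ≤ 1

theorem IsBergePathIn.exists_extend (hac : BergeAcyclic H) {es : List (Finset ℕ)} {vs : List ℕ}
    (hp : IsBergePathIn H es vs) (hlast : ¬ IsLeaf H (es.getD (es.length - 1) ∅)) :
    ∃ es' vs', IsBergePathIn H es' vs' ∧ es'.length = es.length + 1 := by
  have hlen := hp.length_eq
  obtain ⟨u, hu, hne⟩ := (Finset.one_lt_card_iff_nontrivial.mp (not_le.mp hlast)).exists_ne
    (vs.getD (vs.length - 1) 0)
  obtain ⟨hul, huR⟩ := Finset.mem_inter.mp hu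
  obtain ⟨f, hf, huf⟩ := Finset.mem_biUnion.mp huR
  obtain ⟨hfl, hfH⟩ := Finset.mem_erase.mp hf
  by_cases hj : ∃ j, j + 1 < es.length ∧ u ∈ es.getD j ∅
  · obtain ⟨j, hj, huj⟩ := hj
    obtain ⟨s, -, -, hc⟩ := hp.exists_isBergeCycleIn_drop hj huj hul hne
    exact (hac _ hc).elim
  push Not at hj
  refine ⟨es ++ [f], vs ++ [u], hp.append hfH (fun hfes => ?_) (fun huvs => ?_) hul huf, by simp⟩
  · obtain ⟨j, hj', rfl⟩ := List.getElem_of_mem hfes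
    rcases Nat.lt_or_ge (j + 1) es.length with hj'' | hj''
    · exact hj j hj'' (by rwa [List.getD_eq_getElem _ _ hj'])
    · exact hfl (by rw [List.getD_eq_getElem _ _ (by omega)]; congr; omega)
  · obtain ⟨m, hm, rfl⟩ := List.getElem_of_mem huvs
    have := (hp.adj m hm).1
    rw [List.getD_eq_getElem _ _ hm] at this
    exact hj m (by omega) this

theorem BergeAcyclic.exists_isLeaf (hac : BergeAcyclic H) (hne : H.Nonempty) :
    ∃ e ∈ H, IsLeaf H e := by
  by_contra! hno
  obtain ⟨e₀, he₀⟩ := hne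
  have hpaths : ∀ n, ∃ es vs, IsBergePathIn H es vs ∧ es.length = n + 1 := by
    intro n
    induction n with
    | zero => exact ⟨[e₀], [], ⟨by simp, by simpa using he₀, by simp, rfl, by simp⟩, rfl⟩
    | succ n ih =>
      obtain ⟨es, vs, hp, hlen⟩ := ih
      obtain ⟨es', vs', hp', hlen'⟩ :=
        hp.exists_extend hac (hno _ (hp.mem _ (List.getD_mem_of_lt_s10 (by omega))))
      exact ⟨es', vs', hp', by omega⟩
  obtain ⟨es, vs, hp, hlen⟩ := hpaths H.card
  have := hp.nodup_edges.length_le_card_of_forall_mem hp.mem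
  omega

def LeafDecomposable (H : Finset (Finset ℕ)) : Prop :=
  ∀ F ⊆ H, F.Nonempty → ∃ e ∈ F, IsLeaf F e

theorem BergeAcyclic.leafDecomposable (hac : BergeAcyclic H) : LeafDecomposable H :=
  fun _ hF hne => (hac.mono hF).exists_isLeaf hne

theorem LeafDecomposable.sub_one_mul_card_add_one_le_card_biUnion (hk : 0 < k)
    (hcard : ∀ e ∈ H, e.card = k) (hH : LeafDecomposable H) (hne : H.Nonempty) :
    (k - 1) * H.card + 1 ≤ (H.biUnion id).card := by
  induction H using Finset.strongInduction with
  | H H ih =>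
    obtain ⟨e, he, hleaf⟩ := hH H subset_rfl hne
    have hunion : H.biUnion id = e ∪ (H.erase e).biUnion id := by
      conv_lhs => rw [← Finset.insert_erase he]
      rw [Finset.biUnion_insert, id]
    have hsplit := Finset.card_union_add_card_inter e ((H.erase e).biUnion id)
    have hcardH := Finset.card_erase_add_one he
    rw [hunion, ← hcardH, Nat.mul_succ]
    rw [hcard e he] at hsplit
    rcases (H.erase e).eq_empty_or_nonempty with hR | hR
    · simp only [hR, Finset.biUnion_empty, Finset.card_empty, Finset.inter_empty,
        Finset.union_empty] at hsplit ⊢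
      omega
    · have := ih _ (Finset.erase_ssubset he) (fun f hf => hcard f (Finset.mem_of_mem_erase hf))
        (fun F hF => hH F (hF.trans (Finset.erase_subset e H))) hR
      unfold IsLeaf at hleaf
      omega

theorem LeafDecomposable.sub_one_mul_card_add_one_le_card (hk : 0 < k)
    (hcard : ∀ e ∈ H, e.card = k) (hH : LeafDecomposable H) {V : Finset ℕ}
    (hHV : ∀ e ∈ H, e ⊆ V) (hV : V.Nonempty) : (k - 1) * H.card + 1 ≤ V.card := by
  rcases H.eq_empty_or_nonempty with rfl | hne
  · simpa using hV.card_pos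
  · exact (hH.sub_one_mul_card_add_one_le_card_biUnion hk hcard hne).trans
      (Finset.card_le_card (Finset.biUnion_subset.mpr hHV))

theorem IsBergePathIn.getD_last_inter_subset_of_shortest (hp : IsBergePathIn H es vs) {v : ℕ}
    (hvl : v ∈ es.getD (es.length - 1) ∅) (hv0 : v ∈ es.getD 0 ∅)
    (hmin : ∀ c, IsBergeCycleIn H c → es.length ≤ c.length) (h3 : 3 ≤ es.length) :
    es.getD (es.length - 1) ∅ ∩ (es.toFinset.erase (es.getD (es.length - 1) ∅)).biUnion id ⊆
      {vs.getD (vs.length - 1) 0, v} := by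
  intro w hw
  obtain ⟨hwl, hwS⟩ := Finset.mem_inter.mp hw
  obtain ⟨f, hf, hwf⟩ := Finset.mem_biUnion.mp hwS
  obtain ⟨hfl, hfes⟩ := Finset.mem_erase.mp hf
  obtain ⟨j, hj, rfl⟩ := List.getElem_of_mem (List.mem_toFinset.mp hfes)
  have hj' : j + 1 < es.length := by
    by_contra
    exact hfl (by rw [List.getD_eq_getElem _ _ (by omega)]; congr; omega)
  by_contra hw'
  simp only [Finset.mem_insert, Finset.mem_singleton, not_or] at hw'
  obtain ⟨s, hs, hws, hcs⟩ :=
    hp.exists_isBergeCycleIn_drop hj' (by rwa [List.getD_eq_getElem _ _ hj]) hwl hw'.1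
  rcases Nat.eq_zero_or_pos s with rfl | hs0
  · -- then `w` and `v` are two common vertices of the first and the last edge
    have hl0 : es.getD (es.length - 1) ∅ ≠ es.getD 0 ∅ := by
      rw [List.getD_eq_getElem _ _ (by omega), List.getD_eq_getElem _ _ (by omega), Ne,
        hp.nodup_edges.getElem_inj_iff]
      omega
    have hinter := GirthAtLeast.card_inter_le_one h3 hmin
      (hp.mem _ (List.getD_mem_of_lt_s10 (by omega))) (hp.mem _ (List.getD_mem_of_lt_s10 (by omega))) hl0
    exact hw'.2 (Finset.card_le_one.mp hinter w (Finset.mem_inter.mpr ⟨hwl, hws⟩) v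
      (Finset.mem_inter.mpr ⟨hvl, hv0⟩))
  · have := hmin _ hcs
    simp only [List.length_drop] at this
    omega

theorem IsBergeCycleIn.length_mul_sub_one_le_card_biUnion (hk : 0 < k)
    (hcard : ∀ e ∈ H, e.card = k) {es : List (Finset ℕ)} (hc : IsBergeCycleIn H es)
    (hmin : ∀ c, IsBergeCycleIn H c → es.length ≤ c.length) (h3 : 3 ≤ es.length) :
    es.length * (k - 1) ≤ (es.toFinset.biUnion id).card := by
  obtain ⟨vs, v, hp, hvl, hv0⟩ := hc.exists_isBergePathIn
  set e := es.getD (es.length - 1) ∅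
  set S := es.toFinset.erase e
  have he : e ∈ es.toFinset := List.mem_toFinset.mpr (List.getD_mem_of_lt_s10 (by omega))
  have hSH : S ⊆ H := fun f hf => hp.mem f (List.mem_toFinset.mp (Finset.mem_of_mem_erase hf))
  have hScard : S.card = es.length - 1 := by
    rw [Finset.card_erase_of_mem he, List.toFinset_card_of_nodup hp.nodup_edges]
  -- a Berge cycle among the other edges would be shorter than `es`
  have hSac : BergeAcyclic S := fun c hcS => by
    have := hmin c (hcS.mono hSH)
    have := hcS.2.1.length_le_card_of_forall_mem hcS.2.2.1
    omega
  have hS := hSac.leafDecomposable.sub_one_mul_card_add_one_le_card_biUnion hk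
    (fun f hf => hcard f (hSH hf)) (Finset.card_pos.mp (by omega))
  have hmeet : (e ∩ S.biUnion id).card ≤ 2 := (Finset.card_le_card
    (hp.getD_last_inter_subset_of_shortest hvl hv0 hmin h3)).trans Finset.card_le_two
  have hsplit := Finset.card_union_add_card_inter e (S.biUnion id)
  have he_card := hcard e (hp.mem _ (List.getD_mem_of_lt_s10 (by omega)))
  have hℓ : es.length * (k - 1) = (k - 1) * (es.length - 1) + (k - 1) := by
    conv_lhs => rw [← Nat.sub_add_cancel (by omega : 1 ≤ es.length)]
    ring
  have hunion : es.toFinset.biUnion id = e ∪ S.biUnion id := by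
    rw [← Finset.insert_erase he, Finset.biUnion_insert, id]
  rw [hunion]
  rw [hScard] at hS
  omega

theorem GirthAtLeast.mul_sub_one_le_card_biUnion {K : ℕ} (hk : 0 < k) (hK : 3 ≤ K)
    (hcard : ∀ e ∈ H, e.card = k) (hg : GirthAtLeast H K) {es : List (Finset ℕ)}
    (hc : IsBergeCycleIn H es) : K * (k - 1) ≤ (H.biUnion id).card := by
  obtain ⟨c, hc, hmin⟩ :
      ∃ c, IsBergeCycleIn H c ∧ ∀ c', IsBergeCycleIn H c' → c.length ≤ c'.length := by
    have hex : ∃ n, ∃ c, IsBergeCycleIn H c ∧ c.length = n := ⟨_, es, hc, rfl⟩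
    obtain ⟨c, hc, hlen⟩ := Nat.find_spec hex
    exact ⟨c, hc, fun c' hc' => hlen ▸ Nat.find_min' hex ⟨c', hc', rfl⟩⟩
  have hKc := hg c hc
  calc K * (k - 1) ≤ c.length * (k - 1) := Nat.mul_le_mul_right _ hKc
    _ ≤ (c.toFinset.biUnion id).card :=
      hc.length_mul_sub_one_le_card_biUnion hk hcard hmin (hK.trans hKc)
    _ ≤ (H.biUnion id).card := Finset.card_le_card <| Finset.biUnion_subset_biUnion_of_subset_left _
      fun e he => hc.2.2.1 e (List.mem_toFinset.mp he)

end Counting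

section LoosePaths

variable {k : ℕ} {vs : List ℕ}

theorem mem_pathEdge {i x : ℕ} :
    x ∈ pathEdge k vs i ↔ ∃ j < k, vs.getD (i * (k - 1) + j) 0 = x := by
  simp [pathEdge]

theorem mem_pathEdges {e : Finset ℕ} :
    e ∈ pathEdges k vs ↔ ∃ i < numPathEdges k vs, pathEdge k vs i = e := by
  simp [pathEdges]

theorem mul_sub_one_add_lt_length {i j : ℕ} (hi : i < numPathEdges k vs) (hj : j < k) :
    i * (k - 1) + j < vs.length := by
  rcases Nat.lt_or_ge k 2 with hk | hk
  · simp [numPathEdges, show k - 1 = 0 by omega] at hi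
  · have := (Nat.le_div_iff_mul_le (by omega)).mp (Nat.succ_le_of_lt hi)
    rw [Nat.succ_mul] at this
    omega

theorem pathEdge_subset_toFinset {i : ℕ} (hi : i < numPathEdges k vs) :
    pathEdge k vs i ⊆ vs.toFinset := by
  intro x hx
  obtain ⟨j, hj, rfl⟩ := mem_pathEdge.mp hx
  have := mul_sub_one_add_lt_length hi hj
  rw [List.getD_eq_getElem _ _ this]
  exact List.mem_toFinset.mpr (List.getElem_mem _)

theorem pathEdge_inter_subset_of_lt (hnd : vs.Nodup) {i i' : ℕ} (hi : i < numPathEdges k vs)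
    (hi' : i' < i) : pathEdge k vs i ∩ pathEdge k vs i' ⊆ {vs.getD (i * (k - 1)) 0} := by
  intro x hx
  obtain ⟨hx, hx'⟩ := Finset.mem_inter.mp hx
  obtain ⟨j, hj, rfl⟩ := mem_pathEdge.mp hx
  obtain ⟨j', hj', hjj'⟩ := mem_pathEdge.mp hx'
  have hpos := mul_sub_one_add_lt_length hi hj
  have hpos' := mul_sub_one_add_lt_length (hi'.trans hi) hj'
  rw [List.getD_eq_getElem _ _ hpos, List.getD_eq_getElem _ _ hpos',
    hnd.getElem_inj_iff] at hjj'
  have := Nat.mul_le_mul_right (k - 1) (Nat.succ_le_of_lt hi')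
  rw [Nat.succ_mul] at this
  rw [Finset.mem_singleton, show j = 0 by omega, Nat.add_zero]

theorem leafDecomposable_of_subset_pathEdges {ι : Type*} {P : ι → List ℕ}
    (hnd : ∀ j, (P j).Nodup) (hdisj : ∀ j j', j ≠ j' → Disjoint (P j).toFinset (P j').toFinset)
    {H : Finset (Finset ℕ)} (hH : ∀ e ∈ H, ∃ j, e ∈ pathEdges k (P j)) : LeafDecomposable H := by
  rintro F hF ⟨e₀, he₀⟩
  obtain ⟨j, hj⟩ := hH e₀ (hF he₀)
  set I := (Finset.range (numPathEdges k (P j))).filter fun i => pathEdge k (P j) i ∈ F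
  have hI : I.Nonempty := by
    obtain ⟨i, hi, rfl⟩ := mem_pathEdges.mp hj
    exact ⟨i, by simp [I, hi, he₀]⟩
  obtain ⟨hiN, hiF⟩ := Finset.mem_filter.mp (I.max'_mem hI)
  rw [Finset.mem_range] at hiN
  -- the edge of `P j` in `F` with the largest index meets the other edges of `F` only in its
  -- first vertex
  refine ⟨_, hiF, (Finset.card_le_card (t := {(P j).getD (I.max' hI * (k - 1)) 0}) ?_).trans
    (Finset.card_singleton _).le⟩
  intro x hx
  obtain ⟨hxe, hxR⟩ := Finset.mem_inter.mp hx
  obtain ⟨f, hf, hxf⟩ := Finset.mem_biUnion.mp hxR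
  obtain ⟨hfe, hfF⟩ := Finset.mem_erase.mp hf
  obtain ⟨j', hj'⟩ := hH f (hF hfF)
  obtain ⟨i', hi', rfl⟩ := mem_pathEdges.mp hj'
  by_cases hjj : j' = j
  · subst hjj
    have hi'I : i' ∈ I := by simp [I, hi', hfF]
    have hlt : i' < I.max' hI := lt_of_le_of_ne (I.le_max' _ hi'I) (fun h => hfe (h ▸ rfl))
    exact pathEdge_inter_subset_of_lt (hnd _) hiN hlt (Finset.mem_inter.mpr ⟨hxe, hxf⟩)
  · exact absurd (pathEdge_subset_toFinset hiN hxe) <|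
      Finset.disjoint_left.mp (hdisj j' j hjj) (pathEdge_subset_toFinset hi' hxf)

end LoosePaths

namespace Absorber

variable {G : HGraph} {k : ℕ} {X : Finset ℕ} (A : Absorber G k X)

theorem mem_edges_of_mem_edgeSet {e : Finset ℕ} (he : e ∈ A.edgeSet) : e ∈ G.edges := by
  rcases Finset.mem_union.mp he with h | h <;> obtain ⟨j, -, hj⟩ := Finset.mem_biUnion.mp h <;>
    obtain ⟨i, hi, rfl⟩ := mem_pathEdges.mp hj
  exacts [(A.path₁ j).2 i hi, (A.path₂ j).2 i hi]

theorem sub_one_mul_card_add_two_le_two_mul_card (hk : 0 < k) (hG : G.IsUniform k)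
    {E : Finset (Finset ℕ)} {V : Finset ℕ} (hE : E ⊆ A.edgeSet) (hEV : ∀ e ∈ E, e ⊆ V)
    (hV : V.Nonempty) : (k - 1) * E.card + 2 ≤ 2 * V.card := by
  set E₁ := Finset.univ.biUnion fun j => pathEdges k (A.P₁ j)
  have hcard : ∀ e ∈ E, e.card = k := fun e he => (hG e (A.mem_edges_of_mem_edgeSet (hE he))).2
  have hbound : ∀ F ⊆ E, LeafDecomposable F → (k - 1) * F.card + 1 ≤ V.card := fun F hF hF' =>
    hF'.sub_one_mul_card_add_one_le_card hk (fun e he => hcard e (hF he))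
      (fun e he => hEV e (hF he)) hV
  have h₁ := hbound (E.filter (· ∈ E₁)) (Finset.filter_subset _ _) <|
    leafDecomposable_of_subset_pathEdges (fun j => (A.path₁ j).1.1) A.disj₁ fun e he => by
      simpa [E₁] using (Finset.mem_filter.mp he).2
  have h₂ := hbound (E.filter (· ∉ E₁)) (Finset.filter_subset _ _) <|
    leafDecomposable_of_subset_pathEdges (fun j => (A.path₂ j).1.1) A.disj₂ fun e he => by
      obtain ⟨heE, he₁⟩ := Finset.mem_filter.mp he
      obtain ⟨j, -, hj⟩ := Finset.mem_biUnion.mp ((Finset.mem_union.mp (hE heE)).resolve_left he₁)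
      exact ⟨j, hj⟩
  rw [← Finset.card_filter_add_card_filter_not (s := E) (· ∈ E₁), Nat.mul_add]
  omega

end Absorber

theorem sub_one_div_sub_le_one_div_sub_one {k e v : ℕ} (hk : 2 ≤ k) (hv : k < v)
    (h : (k - 1) * e + 1 ≤ v) : ((e : ℝ) - 1) / ((v : ℝ) - k) ≤ 1 / ((k : ℝ) - 1) := by
  have hk' : (2 : ℝ) ≤ k := by exact_mod_cast hk
  have hv' : (k : ℝ) < v := by exact_mod_cast hv
  have h' : ((k : ℝ) - 1) * e + 1 ≤ v := by
    rw [← Nat.cast_pred (by omega)]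
    exact_mod_cast h
  rw [div_le_div_iff₀ (by linarith) (by linarith)]
  linarith

theorem sub_one_div_sub_le_two_div_sub_one_add_one_div {k K e v : ℕ} (hk : 2 ≤ k) (hK : 3 ≤ K)
    (hKv : K * (k - 1) ≤ v) (h : (k - 1) * e + 2 ≤ 2 * v) :
    ((e : ℝ) - 1) / ((v : ℝ) - k) ≤ 2 / ((k : ℝ) - 1) + 1 / ((K : ℝ) * ((k : ℝ) - 1) - k) := by
  have hk' : (2 : ℝ) ≤ k := by exact_mod_cast hk
  have hK' : (3 : ℝ) ≤ K := by exact_mod_cast hK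
  have hKv' : (K : ℝ) * ((k : ℝ) - 1) ≤ v := by
    rw [← Nat.cast_pred (by omega)]
    exact_mod_cast hKv
  have h' : ((k : ℝ) - 1) * e + 2 ≤ 2 * v := by
    rw [← Nat.cast_pred (by omega)]
    exact_mod_cast h
  have hQ : 0 < (K : ℝ) * ((k : ℝ) - 1) - k := by nlinarith
  -- `(k - 1)(e - 1) ≤ 2 (v - k) + (k - 1)`, and `v - k ≥ K (k - 1) - k`
  calc ((e : ℝ) - 1) / ((v : ℝ) - k) ≤ 2 / ((k : ℝ) - 1) + 1 / ((v : ℝ) - k) := by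
        rw [div_add_div _ _ (by linarith) (by linarith), div_le_div_iff₀ (by linarith)
          (by nlinarith)]
        nlinarith
    _ ≤ _ := by gcongr

theorem BergeAcyclic.kDensityLE {F : HGraph} {k : ℕ} (hk : 2 ≤ k) (hF : F.IsUniform k)
    (hac : BergeAcyclic F.edges) : kDensityLE F k (1 / ((k : ℝ) - 1)) := by
  intro V' _ E' hE' hEV hkV
  exact sub_one_div_sub_le_one_div_sub_one hk hkV <|
    (hac.mono hE').leafDecomposable.sub_one_mul_card_add_one_le_card (by omega)
      (fun e he => (hF e (hE' he)).2) hEV (Finset.card_pos.mp (by omega))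

theorem Absorber.KSparse.kDensityLE {G : HGraph} {k K : ℕ} {X : Finset ℕ} {A : Absorber G k X}
    (hk : 2 ≤ k) (hK : 3 ≤ K) (hG : G.IsUniform k) (hA : A.KSparse K) :
    kDensityLE A.graph k (2 / ((k : ℝ) - 1) + 1 / ((K : ℝ) * ((k : ℝ) - 1) - k)) := by
  intro V' _ E' hE' hEV hkV
  have hcard : ∀ e ∈ E', e.card = k := fun e he => (hG e (A.mem_edges_of_mem_edgeSet (hE' he))).2
  have hV' : V'.Nonempty := Finset.card_pos.mp (by omega)
  by_cases hac : BergeAcyclic E'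
  · have hk' : (2 : ℝ) ≤ k := by exact_mod_cast hk
    have hK' : (3 : ℝ) ≤ K := by exact_mod_cast hK
    have hQ : 0 ≤ 1 / ((K : ℝ) * ((k : ℝ) - 1) - k) := one_div_nonneg.mpr (by nlinarith)
    calc _ ≤ 1 / ((k : ℝ) - 1) := sub_one_div_sub_le_one_div_sub_one hk hkV <|
          hac.leafDecomposable.sub_one_mul_card_add_one_le_card (by omega) hcard hEV hV'
      _ ≤ 2 / ((k : ℝ) - 1) := div_le_div_of_nonneg_right (by norm_num) (by linarith)
      _ ≤ _ := le_add_of_nonneg_right hQ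
  · obtain ⟨es, hes⟩ : ∃ es, IsBergeCycleIn E' es := by simpa [BergeAcyclic] using hac
    have hg : GirthAtLeast E' K := hA.mono (hE'.trans (Finset.subset_insert X A.edgeSet))
    exact sub_one_div_sub_le_two_div_sub_one_add_one_div hk hK
      ((hg.mul_sub_one_le_card_biUnion (by omega) hK hcard hes).trans
        (Finset.card_le_card (Finset.biUnion_subset.mpr hEV)))
      (A.sub_one_mul_card_add_two_le_two_mul_card (by omega) hG hE' hEV hV')

/-- k-density of Berge acyclic graphs and of sparse absorbers. -/
theorem kDensity_acyclic_and_sparse_absorber (k : ℕ) (hk : 3 ≤ k) :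
    (∀ F : HGraph, F.IsUniform k → BergeAcyclic F.edges → k < F.verts.card →
      kDensityLE F k (1 / ((k : ℝ) - 1))) ∧
    (∀ K : ℕ, 3 ≤ K →
      ∀ (G : HGraph) (X : Finset ℕ) (A : Absorber G k X),
        G.IsUniform k → X.card = k - 1 → A.KSparse K → k < A.graph.verts.card →
        kDensityLE A.graph k
          (2 / ((k : ℝ) - 1) + 1 / ((K : ℝ) * ((k : ℝ) - 1) - (k : ℝ)))) :=
  ⟨fun _ hF hac _ => hac.kDensityLE (by omega) hF,
    fun _ hK _ _ _ hG _ hA _ => hA.kDensityLE (by omega) hK hG⟩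
end

section
/- For all integers K' ≥ 1 and r ≥ 1, set m = 2^{2K'(2K'−1)} and q = 2^{2K'−1}·r·m!. Then there exists an (m,q)-double-strip whose girth is at least 2K'. -/
open Finset

attribute [local instance] Classical.propDecidable

/-- The cyclic successor of an index. -/
def stripNext {q : ℕ} (i : Fin q) : Fin q := ⟨(i.val + 1) % q, Nat.mod_lt _ i.pos⟩

/-- Encoding of a pair of `(m,q)`-strips: the classes are `B_i = {i} × Fin m`
(`i : Fin q`), and the `i`-th perfect matching of the strip `σ` joins `(i, a)` to
`(i+1, σ i a)`. The union of the two strips `σ, τ` as a `2`-uniform graph. -/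
def doubleStripGraph (m q : ℕ) (σ τ : Fin q → Equiv.Perm (Fin m)) :
    SimpleGraph (Fin q × Fin m) :=
  SimpleGraph.fromRel fun x y =>
    y.1 = stripNext x.1 ∧ (y.2 = σ x.1 x.2 ∨ y.2 = τ x.1 x.2)

/-- A strip is cyclical if following its matchings all the way around `B_1, B_2, …, B_1`
induces the identity permutation of `B_1`. -/
def IsCyclicalStrip {m q : ℕ} (σ : Fin q → Equiv.Perm (Fin m)) : Prop :=
  (List.ofFn σ).reverse.prod = 1

/-!
Both strips are taken constant: every matching of the first follows one permutation `s` of the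
`m` points, every matching of the second one permutation `u`. As `m!` divides `q`, both strips
are cyclical. Walking along a cycle of length `ℓ` spells a word of length `ℓ` in `s^{±1}, u^{±1}`
that fixes a point, and the word is reduced because a cycle never runs back along the edge it
just used.

Let `s, u` be left multiplication by Sanov's matrices `!![1, 2; 0, 1]` and `!![1, 0; 2, 1]` on the
group of `2 × 2` matrices over `ℤ/2^{j+1}` that are `≡ 1 (mod 2)` (order `2^{4j}`, padded out to
`m` points). A fixed point then forces the integer word to be `≡ 1 (mod 2^{j+1})`. Ping-pong on its
columns shows that some off-diagonal entry of a nonempty reduced word of length `ℓ` is nonzero and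
at most `3^ℓ` in absolute value, so `2^{j+1} ≤ 3^ℓ`. Since `q` is even, all cycles are even, and
for `j = K'(K'-1)` this gives `ℓ ≥ 2K'`. For `K' = 1` any two permutations that nowhere agree
will do.
-/

open SimpleGraph Equiv

lemma List.IsChain.and {α : Type*} {R S : α → α → Prop} :
    ∀ {l : List α}, l.IsChain R → l.IsChain S → l.IsChain fun a b => R a b ∧ S a b
  | [], _, _ => .nil
  | [_], _, _ => .singleton _
  | _ :: _ :: _, hR, hS => by
    rw [List.isChain_cons_cons] at hR hS ⊢
    exact ⟨⟨hR.1, hS.1⟩, hR.2.and hS.2⟩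

section ConstantStrip

variable {m q : ℕ}

lemma stripNext_eq_add_one [NeZero q] (i : Fin q) : stripNext i = i + 1 := by
  ext
  simp [stripNext, Fin.val_add, Nat.add_mod]

lemma stripNext_injective : Function.Injective (stripNext : Fin q → Fin q) := by
  intro i j h
  have : NeZero q := ⟨i.pos.ne'⟩
  simpa [stripNext_eq_add_one] using h

lemma perm_pow_eq_one_of_factorial_dvd (s : Perm (Fin m)) (hq : m.factorial ∣ q) : s ^ q = 1 := by
  obtain ⟨c, rfl⟩ := hq
  have : s ^ m.factorial = 1 := by
    have := pow_card_eq_one (x := s)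
    rwa [Fintype.card_perm, Fintype.card_fin] at this
  rw [pow_mul, this, one_pow]

lemma isCyclicalStrip_const (s : Perm (Fin m)) (hs : s ^ q = 1) :
    IsCyclicalStrip (fun _ : Fin q => s) := by
  rw [IsCyclicalStrip, List.ofFn_const, List.reverse_replicate, List.prod_replicate, hs]

abbrev constDoubleStrip (q : ℕ) (g : Bool → Perm (Fin m)) : SimpleGraph (Fin q × Fin m) :=
  doubleStripGraph m q (fun _ => g false) (fun _ => g true)

variable {g : Bool → Perm (Fin m)}

def IsLetterStep (g : Bool → Perm (Fin m)) : Bool × Bool → Fin q × Fin m → Fin q × Fin m → Prop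
  | (b, true), x, y => x = (stripNext y.1, g b y.2)
  | (b, false), x, y => y = (stripNext x.1, g b x.2)

lemma exists_isLetterStep {x y : Fin q × Fin m} (h : (constDoubleStrip q g).Adj x y) :
    ∃ l, IsLetterStep g l x y := by
  rcases (SimpleGraph.fromRel_adj _ _ _).mp h |>.2 with ⟨h1, h2 | h2⟩ | ⟨h1, h2 | h2⟩
  · exact ⟨(false, false), Prod.ext h1 h2⟩
  · exact ⟨(true, false), Prod.ext h1 h2⟩
  · exact ⟨(false, true), Prod.ext h1 h2⟩
  · exact ⟨(true, true), Prod.ext h1 h2⟩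

lemma IsLetterStep.snd_eq {l : Bool × Bool} {x y : Fin q × Fin m} (h : IsLetterStep g l x y) :
    x.2 = FreeGroup.lift g (FreeGroup.mk [l]) y.2 := by
  obtain ⟨b, _ | _⟩ := l <;> subst h <;> simp [FreeGroup.lift_mk]

lemma IsLetterStep.eq_of_flip {b e : Bool} {x y z : Fin q × Fin m} (hxy : IsLetterStep g (b, e) x y)
    (hyz : IsLetterStep g (b, !e) y z) : x = z := by
  cases e
  · have h := hxy.symm.trans hyz
    simp only [Prod.mk.injEq, EmbeddingLike.apply_eq_iff_eq] at h
    exact Prod.ext (stripNext_injective h.1) h.2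
  · exact hxy.trans hyz.symm

lemma IsLetterStep.snd_eq_of_fst_eq {l l' : Bool × Bool} {x y z : Fin q × Fin m}
    (hxy : IsLetterStep g l x y) (hyz : IsLetterStep g l' y z) (hne : s(x, y) ≠ s(y, z))
    (hl : l.1 = l'.1) : l.2 = l'.2 := by
  obtain ⟨b, e⟩ := l
  obtain ⟨b', e'⟩ := l'
  obtain rfl : b = b' := hl
  by_contra he
  obtain rfl : e' = !e := by cases e <;> cases e' <;> simp_all
  exact hne (by rw [hxy.eq_of_flip hyz, Sym2.eq_swap])

theorem exists_isReduced_of_isTrail {x y : Fin q × Fin m} (w : (constDoubleStrip q g).Walk x y)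
    (hw : w.IsTrail) : ∃ L : List (Bool × Bool), L.length = w.length ∧ FreeGroup.IsReduced L ∧
      x.2 = FreeGroup.lift g (FreeGroup.mk L) y.2 := by
  choose letter hletter using fun (d : (constDoubleStrip q g).Dart) => exists_isLetterStep d.adj
  refine ⟨w.darts.map letter, by simp, ?_, ?_⟩
  · have hchain := w.isChain_dartAdj_darts.and (List.pairwise_map.mp hw.edges_nodup).isChain
    refine (List.isChain_map letter).mpr (hchain.imp fun d d' ⟨hadj, hne⟩ => ?_)
    have hd' := hletter d'
    rw [SimpleGraph.DartAdj] at hadj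
    rw [← hadj] at hd'
    exact (hletter d).snd_eq_of_fst_eq hd' (by simpa [SimpleGraph.Dart.edge, hadj] using hne)
  · clear hw
    induction w with
    | nil => simp
    | cons h p ih =>
      rw [SimpleGraph.Walk.darts_cons, List.map_cons, ← List.singleton_append, ← FreeGroup.mul_mk,
        map_mul, Equiv.Perm.mul_apply, ← ih]
      exact (hletter ⟨(_, _), h⟩).snd_eq

lemma even_val_stripNext_iff (hq : Even q) (i : Fin q) :
    Even (stripNext i).val ↔ ¬ Even i.val := by
  obtain ⟨r, rfl⟩ := hq
  have := i.isLt
  simp only [stripNext, Nat.even_iff]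
  rcases Nat.lt_or_ge (i.val + 1) (r + r) with h | h
  · rw [Nat.mod_eq_of_lt h]; omega
  · rw [show i.val + 1 = r + r by omega, Nat.mod_self]; omega

lemma even_length_of_closed_walk {σ τ : Fin q → Perm (Fin m)} (hq : Even q) {x : Fin q × Fin m}
    (w : (doubleStripGraph m q σ τ).Walk x x) : Even w.length := by
  let c : (doubleStripGraph m q σ τ).Coloring Bool :=
    Coloring.mk (fun x => decide (Even x.1.val)) fun {x y} h => by
      rcases ((SimpleGraph.fromRel_adj _ _ _).mp h).2 with ⟨h1, -⟩ | ⟨h1, -⟩ <;>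
        simp only [h1, even_val_stripNext_iff hq, ne_eq, decide_eq_decide] <;> tauto
  exact (c.even_length_iff_congr w).mpr Iff.rfl

lemma not_isAcyclic_doubleStripGraph {s : Perm (Fin m)} (τ : Fin q → Perm (Fin m)) (hq : 3 ≤ q)
    (hs : s ^ q = 1) (a : Fin m) : ¬ (doubleStripGraph m q (fun _ => s) τ).IsAcyclic := by
  have : NeZero q := ⟨by omega⟩
  have hone : ((1 : Fin q) : ℕ) = 1 := by rw [Fin.val_one', Nat.mod_eq_of_lt (by omega)]
  let φ : Fin q → Fin q × Fin m := fun i => (i, (s ^ (i : ℕ)) a)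
  have hstep : ∀ i, (doubleStripGraph m q (fun _ => s) τ).Adj (φ i) (φ (i + 1)) := by
    intro i
    refine (SimpleGraph.fromRel_adj _ _ _).mpr
      ⟨fun h => ?_, Or.inl ⟨(stripNext_eq_add_one i).symm, Or.inl ?_⟩⟩
    · have h1 : (1 : Fin q) ≠ 0 := by rw [Ne, Fin.one_eq_zero_iff]; omega
      exact h1 (add_eq_left.mp (congrArg Prod.fst h).symm)
    · simp only [φ, Fin.val_add, hone, ← pow_eq_pow_mod _ hs, pow_succ', Perm.mul_apply]
  have hsub : ∀ {i j : Fin q}, ((i - j : Fin q) : ℕ) = 1 → i = j + 1 := fun h =>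
    sub_eq_iff_eq_add'.mp (Fin.ext (h.trans hone.symm))
  let φhom : cycleGraph q →g doubleStripGraph m q (fun _ => s) τ :=
    ⟨φ, fun {i j} h => (cycleGraph_adj'.mp h).elim (fun h => hsub h ▸ (hstep j).symm)
      (fun h => hsub h ▸ hstep i)⟩
  have hinj : Function.Injective φhom := fun i j h => congrArg Prod.fst h
  exact fun h => isAcyclic_iff_free_cycleGraph.mp h _ hq ⟨⟨φhom, hinj⟩⟩

lemma SimpleGraph.le_girth_of_forall_isCycle {V : Type*} {G : SimpleGraph V} {n : ℕ}
    (hG : ¬ G.IsAcyclic) (h : ∀ a (w : G.Walk a a), w.IsCycle → n ≤ w.length) : n ≤ G.girth := by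
  obtain ⟨a, w, hw, hlen⟩ := exists_girth_eq_length.mpr hG
  exact hlen ▸ h a w hw

theorem exists_doubleStrip_le_girth [NeZero m] {n : ℕ} (hq : m.factorial ∣ q) (hq3 : 3 ≤ q)
    (g : Bool → Perm (Fin m)) (hg : ∀ a, g false a ≠ g true a)
    (hlen : ∀ x (w : (constDoubleStrip q g).Walk x x), w.IsCycle → n ≤ w.length) :
    ∃ σ τ : Fin q → Perm (Fin m), IsCyclicalStrip σ ∧ IsCyclicalStrip τ ∧
      (∀ i a, σ i a ≠ τ i a) ∧ (n : ℕ∞) ≤ (doubleStripGraph m q σ τ).girth :=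
  ⟨_, _, isCyclicalStrip_const _ (perm_pow_eq_one_of_factorial_dvd _ hq),
    isCyclicalStrip_const _ (perm_pow_eq_one_of_factorial_dvd _ hq), fun _ => hg,
    Nat.cast_le.mpr <| le_girth_of_forall_isCycle
      (not_isAcyclic_doubleStripGraph _ hq3 (perm_pow_eq_one_of_factorial_dvd _ hq) 0) hlen⟩

end ConstantStrip

section PaddedRegularAction

variable {X Γ ι : Type*} [Group Γ]

def padMulLeft (E : X ≃ Γ × ι) : Γ →* Perm X where
  toFun γ := (E.trans ((Equiv.mulLeft γ).prodCongr (Equiv.refl ι))).trans E.symm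
  map_one' := by ext; simp
  map_mul' _ _ := by ext; simp [Prod.map]

lemma padMulLeft_apply (E : X ≃ Γ × ι) (γ : Γ) (a : X) :
    padMulLeft E γ a = E.symm (γ * (E a).1, (E a).2) := rfl

lemma eq_one_of_padMulLeft_apply_eq {E : X ≃ Γ × ι} {γ : Γ} {a : X} (h : padMulLeft E γ a = a) :
    γ = 1 := by
  rw [padMulLeft_apply, Equiv.symm_apply_eq] at h
  simpa using congrArg Prod.fst h

lemma padMulLeft_apply_ne {E : X ≃ Γ × ι} {γ γ' : Γ} (h : γ ≠ γ') (a : X) :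
    padMulLeft E γ a ≠ padMulLeft E γ' a := by
  simpa [padMulLeft_apply] using h

end PaddedRegularAction

def letterSign : Bool → ℤ
  | true => 1
  | false => -1

def sanovMatrix : Bool × Bool → Matrix (Fin 2) (Fin 2) ℤ
  | (false, e) => !![1, 2 * letterSign e; 0, 1]
  | (true, e) => !![1, 0; 2 * letterSign e, 1]

lemma sanovMatrix_mul_flip (b e : Bool) : sanovMatrix (b, e) * sanovMatrix (b, !e) = 1 := by
  cases b <;> cases e <;> ext i j <;> fin_cases i <;> fin_cases j <;>
    simp [sanovMatrix, letterSign, Matrix.mul_apply, Fin.sum_univ_two]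

def sanovUnit (b : Bool) : (Matrix (Fin 2) (Fin 2) ℤ)ˣ :=
  ⟨sanovMatrix (b, true), sanovMatrix (b, false), sanovMatrix_mul_flip b true,
    sanovMatrix_mul_flip b false⟩

def sanovWord (L : List (Bool × Bool)) : Matrix (Fin 2) (Fin 2) ℤ :=
  (FreeGroup.lift sanovUnit (FreeGroup.mk L) : (Matrix (Fin 2) (Fin 2) ℤ)ˣ)

lemma sanovWord_nil : sanovWord [] = 1 := rfl

lemma sanovWord_cons (l : Bool × Bool) (L : List (Bool × Bool)) :
    sanovWord (l :: L) = sanovMatrix l * sanovWord L := by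
  obtain ⟨b, _ | _⟩ := l <;> simp [sanovWord, FreeGroup.lift_mk, sanovUnit]

@[simp] lemma abs_letterSign (e : Bool) : |letterSign e| = 1 := by
  cases e <;> simp [letterSign]

lemma abs_letterSign_mul (e : Bool) (x : ℤ) : |letterSign e * x| = |x| := by
  rw [abs_mul, abs_letterSign, one_mul]

def Dominates (x z : ℤ) : Prop := |z| < |x| ∧ 0 ≤ x * z

lemma dominates_add_two_mul {x z : ℤ} (h : Dominates x z ∨ |x| < |z|) :
    Dominates (x + 2 * z) z := by
  unfold Dominates at *
  rcases abs_cases x with ⟨hx, _⟩ | ⟨hx, _⟩ <;> rcases abs_cases z with ⟨hz, _⟩ | ⟨hz, _⟩ <;>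
    rcases abs_cases (x + 2 * z) with ⟨hxz, _⟩ | ⟨hxz, _⟩ <;> rw [hx, hz] at h <;>
    rw [hxz, hz] <;> rcases h with ⟨h, _⟩ | h <;> constructor <;> nlinarith

/-- The ping-pong set of the letter `l`, on column vectors `(x, y)`. -/
def InPingPongSet : Bool × Bool → ℤ → ℤ → Prop
  | (false, e), x, y => Dominates x (letterSign e * y)
  | (true, e), x, y => Dominates y (letterSign e * x)

def InPingPongDomain : Bool × Bool → ℤ → ℤ → Prop
  | (false, e), x, y => Dominates x (letterSign e * y) ∨ |x| < |y|
  | (true, e), x, y => Dominates y (letterSign e * x) ∨ |y| < |x|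

lemma inPingPongSet_sanovMatrix_mul {l : Bool × Bool} {W : Matrix (Fin 2) (Fin 2) ℤ} {j : Fin 2}
    (h : InPingPongDomain l (W 0 j) (W 1 j)) :
    InPingPongSet l ((sanovMatrix l * W) 0 j) ((sanovMatrix l * W) 1 j) := by
  obtain ⟨_ | _, e⟩ := l <;>
    simp only [InPingPongDomain, InPingPongSet, sanovMatrix, Matrix.mul_apply,
      Fin.sum_univ_two] at h ⊢ <;>
    simp only [Matrix.of_apply, Matrix.cons_val', Matrix.cons_val_zero, Matrix.cons_val_one,
      Matrix.empty_val', Matrix.cons_val_fin_one, one_mul, zero_mul, add_zero, zero_add]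
  · rw [mul_assoc]
    exact dominates_add_two_mul (by rwa [abs_letterSign_mul])
  · rw [add_comm, mul_assoc]
    exact dominates_add_two_mul (by rwa [abs_letterSign_mul])

lemma inPingPongDomain_of_inPingPongSet {l l' : Bool × Bool} (hll' : l.1 = l'.1 → l.2 = l'.2)
    {x y : ℤ} (h : InPingPongSet l' x y) : InPingPongDomain l x y := by
  obtain ⟨_ | _, e⟩ := l <;> obtain ⟨_ | _, e'⟩ := l' <;>
    simp only [InPingPongSet, InPingPongDomain] at h ⊢
  · exact Or.inl ((show e = e' from hll' rfl) ▸ h)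
  · exact Or.inr (abs_letterSign_mul e' x ▸ h.1)
  · exact Or.inr (abs_letterSign_mul e' y ▸ h.1)
  · exact Or.inl ((show e = e' from hll' rfl) ▸ h)

lemma inPingPongDomain_one (l : Bool × Bool) (j : Fin 2) :
    InPingPongDomain l ((1 : Matrix (Fin 2) (Fin 2) ℤ) 0 j)
      ((1 : Matrix (Fin 2) (Fin 2) ℤ) 1 j) := by
  revert j
  obtain ⟨_ | _, e⟩ := l <;> simp [Fin.forall_fin_two, InPingPongDomain, Dominates]

lemma inPingPongSet_sanovWord {l : Bool × Bool} {L : List (Bool × Bool)}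
    (hL : FreeGroup.IsReduced (l :: L)) (j : Fin 2) :
    InPingPongSet l (sanovWord (l :: L) 0 j) (sanovWord (l :: L) 1 j) := by
  induction L generalizing l with
  | nil =>
    rw [sanovWord_cons, sanovWord_nil]
    exact inPingPongSet_sanovMatrix_mul (inPingPongDomain_one l j)
  | cons l' L ih =>
    rw [FreeGroup.isReduced_cons_cons] at hL
    rw [sanovWord_cons]
    exact inPingPongSet_sanovMatrix_mul (inPingPongDomain_of_inPingPongSet hL.1 (ih hL.2))

lemma abs_add_two_mul_letterSign_le (x y : ℤ) (e : Bool) :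
    |x + 2 * letterSign e * y| ≤ |x| + 2 * |y| := by
  simpa [mul_assoc, abs_mul] using abs_add_le x (2 * letterSign e * y)

lemma abs_sanovWord_le (L : List (Bool × Bool)) (i j : Fin 2) :
    |sanovWord L i j| ≤ 3 ^ L.length := by
  suffices h : ∀ j, |sanovWord L 0 j| + |sanovWord L 1 j| ≤ 3 ^ L.length by
    revert i
    rw [Fin.forall_fin_two]
    constructor <;> linarith [h j, abs_nonneg (sanovWord L 0 j), abs_nonneg (sanovWord L 1 j)]
  intro j
  induction L with
  | nil => fin_cases j <;> simp [sanovWord_nil]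
  | cons l L ih =>
    rw [sanovWord_cons, List.length_cons, pow_succ]
    obtain ⟨_ | _, e⟩ := l <;>
      simp only [sanovMatrix, Matrix.mul_apply, Fin.sum_univ_two, Matrix.of_apply,
        Matrix.cons_val', Matrix.cons_val_zero, Matrix.cons_val_one, Matrix.empty_val',
        Matrix.cons_val_fin_one, one_mul, zero_mul, add_zero, zero_add]
    · linarith [abs_add_two_mul_letterSign_le (sanovWord L 0 j) (sanovWord L 1 j) e,
        abs_nonneg (sanovWord L 0 j)]
    · rw [add_comm (2 * letterSign e * sanovWord L 0 j)]
      linarith [abs_add_two_mul_letterSign_le (sanovWord L 1 j) (sanovWord L 0 j) e,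
        abs_nonneg (sanovWord L 1 j)]

lemma le_three_pow_length_of_entry_ne_zero {N : ℕ} {L : List (Bool × Bool)} {i j : Fin 2}
    (hij : i ≠ j) (h : (sanovWord L).map (Int.cast : ℤ → ZMod N) = 1) (h0 : sanovWord L i j ≠ 0) :
    N ≤ 3 ^ L.length := by
  have hdvd : (N : ℤ) ∣ sanovWord L i j := by
    rw [← ZMod.intCast_zmod_eq_zero_iff_dvd]
    simpa [Matrix.one_apply_ne hij] using congrFun (congrFun h i) j
  have := (Int.le_of_dvd (abs_pos.mpr h0) ((dvd_abs _ _).mpr hdvd)).trans (abs_sanovWord_le L i j)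
  exact_mod_cast this

theorem le_three_pow_length_of_map_sanovWord_eq_one {N : ℕ} {L : List (Bool × Bool)}
    (hL : FreeGroup.IsReduced L) (hne : L ≠ [])
    (h : (sanovWord L).map (Int.cast : ℤ → ZMod N) = 1) : N ≤ 3 ^ L.length := by
  obtain ⟨⟨_ | _, e⟩, L, rfl⟩ := List.exists_cons_of_ne_nil hne
  · have hdom := (inPingPongSet_sanovWord hL 1).1
    exact le_three_pow_length_of_entry_ne_zero (i := 0) (j := 1) (by decide) h
      fun h0 => (abs_nonneg _).not_gt (by simpa [h0] using hdom)
  · have hdom := (inPingPongSet_sanovWord hL 0).1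
    exact le_three_pow_length_of_entry_ne_zero (i := 1) (j := 0) (by decide) h
      fun h0 => (abs_nonneg _).not_gt (by simpa [h0] using hdom)

section CongruenceQuotient

variable (j : ℕ)

abbrev modTwo : ZMod (2 ^ (j + 1)) →+* ZMod 2 :=
  ZMod.castHom (dvd_pow_self 2 j.succ_ne_zero) (ZMod 2)

def kerModTwo : Subgroup (Matrix (Fin 2) (Fin 2) (ZMod (2 ^ (j + 1))))ˣ :=
  (Units.map (modTwo j).mapMatrix.toMonoidHom).ker

variable {j}

lemma isUnit_of_modTwo_eq_one {x : ZMod (2 ^ (j + 1))} (h : modTwo j x = 1) : IsUnit x := by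
  rw [← ZMod.natCast_zmod_val x, ZMod.isUnit_natCast_iff_not_dvd_pow Nat.prime_two j.succ_pos,
    ← ZMod.natCast_eq_zero_iff]
  rw [← ZMod.natCast_zmod_val x, map_natCast] at h
  simp [h]

lemma isUnit_of_mapMatrix_modTwo_eq_one {P : Matrix (Fin 2) (Fin 2) (ZMod (2 ^ (j + 1)))}
    (h : (modTwo j).mapMatrix P = 1) : IsUnit P := by
  rw [Matrix.isUnit_iff_isUnit_det]
  apply isUnit_of_modTwo_eq_one
  rw [RingHom.map_det, h, Matrix.det_one]

lemma card_mapMatrix_modTwo_eq_one :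
    Nat.card {P : Matrix (Fin 2) (Fin 2) (ZMod (2 ^ (j + 1))) // (modTwo j).mapMatrix P = 1} =
      2 ^ (4 * j) := by
  let f : Matrix (Fin 2) (Fin 2) (ZMod (2 ^ (j + 1))) →+ Matrix (Fin 2) (Fin 2) (ZMod 2) :=
    (modTwo j).mapMatrix.toAddMonoidHom
  have hsurj : Function.Surjective f := fun B =>
    ⟨B.map fun z => (z.cast : ZMod (2 ^ (j + 1))), by ext; simp [f, ZMod.ringHom_map_cast]⟩
  have hfiber (B) : #{P | f P = B} = #{P | f P = 1} :=
    AddMonoidHom.card_fiber_eq_of_mem_range f (hsurj B) (hsurj 1)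
  have htotal := card_eq_sum_card_fiberwise (f := f) (s := univ) (t := univ) (by simp)
  simp only [hfiber, sum_const, card_univ, smul_eq_mul, ← Nat.card_eq_fintype_card] at htotal
  rw [Nat.card_eq_fintype_card, Fintype.card_subtype]
  simp only [Matrix, Nat.card_eq_fintype_card, Fintype.card_pi, ZMod.card, prod_const, card_univ,
    Fintype.card_fin] at htotal
  refine Nat.eq_of_mul_eq_mul_left (show 0 < 2 ^ 2 ^ 2 by norm_num) (htotal.symm.trans ?_)
  ring

lemma card_kerModTwo : Nat.card (kerModTwo j) = 2 ^ (4 * j) := by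
  rw [← card_mapMatrix_modTwo_eq_one]
  exact Nat.card_congr
    { toFun u := ⟨u.1, (Units.ext_iff.mp (MonoidHom.mem_ker.mp u.2) :)⟩
      invFun P := ⟨(isUnit_of_mapMatrix_modTwo_eq_one P.2).unit,
        by simpa [kerModTwo, Units.ext_iff] using P.2⟩
      left_inv _ := Subtype.ext (Units.ext rfl)
      right_inv _ := rfl }

variable (j) in
def sanovRep : FreeGroup Bool →* kerModTwo j :=
  FreeGroup.lift fun b => ⟨Units.map (Int.castRingHom _).mapMatrix.toMonoidHom (sanovUnit b), by
    rw [kerModTwo, MonoidHom.mem_ker, Units.ext_iff]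
    ext i k
    fin_cases i <;> fin_cases k <;> cases b <;>
      simp [sanovUnit, sanovMatrix, letterSign, -ZMod.castHom_apply, map_ofNat] <;> rfl⟩

lemma coe_sanovRep_mk (L : List (Bool × Bool)) :
    ((sanovRep j (FreeGroup.mk L) : (Matrix (Fin 2) (Fin 2) (ZMod (2 ^ (j + 1))))ˣ) :
      Matrix (Fin 2) (Fin 2) (ZMod (2 ^ (j + 1)))) = (sanovWord L).map (Int.cast) := by
  have h : (kerModTwo j).subtype.comp (sanovRep j) =
      (Units.map (Int.castRingHom _).mapMatrix.toMonoidHom).comp (FreeGroup.lift sanovUnit) :=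
    FreeGroup.ext_hom _ _ fun _ => by simp [sanovRep]
  simpa [sanovWord] using congrArg Units.val (DFunLike.congr_fun h (FreeGroup.mk L))

lemma sanovRep_of_false_ne_of_true (hj : 1 ≤ j) :
    sanovRep j (FreeGroup.of false) ≠ sanovRep j (FreeGroup.of true) := by
  intro h
  have h01 := congrArg (fun γ : kerModTwo j => γ.1.1 0 1) h
  simp [sanovRep, sanovUnit, sanovMatrix, letterSign] at h01
  have hdvd := (ZMod.natCast_eq_zero_iff 2 (2 ^ (j + 1))).mp (by exact_mod_cast h01)
  have := (Nat.pow_le_pow_right two_pos (by omega : 2 ≤ j + 1)).trans (Nat.le_of_dvd two_pos hdvd)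
  omega

theorem exists_sanov_perms {m : ℕ} (hj : 1 ≤ j) (hm : 2 ^ (4 * j) ∣ m) :
    ∃ g : Bool → Perm (Fin m), (∀ a, g false a ≠ g true a) ∧
      ∀ L, FreeGroup.IsReduced L → L ≠ [] → ∀ a, FreeGroup.lift g (FreeGroup.mk L) a = a →
        2 ^ (j + 1) ≤ 3 ^ L.length := by
  obtain ⟨c, rfl⟩ := hm
  let E : Fin (2 ^ (4 * j) * c) ≃ kerModTwo j × Fin c :=
    (Finite.equivFinOfCardEq (by rw [Nat.card_prod, card_kerModTwo, Nat.card_fin])).symm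
  refine ⟨fun b => padMulLeft E (sanovRep j (.of b)),
    fun a => padMulLeft_apply_ne (sanovRep_of_false_ne_of_true hj) a, fun L hL hne a ha => ?_⟩
  have hlift : FreeGroup.lift (fun b => padMulLeft E (sanovRep j (.of b))) =
      (padMulLeft E).comp (sanovRep j) := FreeGroup.ext_hom _ _ fun _ => by simp
  rw [hlift] at ha
  have hone := eq_one_of_padMulLeft_apply_eq ha
  refine le_three_pow_length_of_map_sanovWord_eq_one hL hne ?_
  rw [← coe_sanovRep_mk, hone]
  rfl

end CongruenceQuotient

lemma nine_pow_lt_two_pow {j : ℕ} (hj : 2 ≤ j) : 9 ^ j < 2 ^ (j * (j + 1) + 1) := by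
  induction j, hj using Nat.le_induction with
  | base => norm_num
  | succ j hj ih =>
    have h9 : 9 ≤ 2 ^ (2 * j + 2) :=
      le_trans (by norm_num) (Nat.pow_le_pow_right two_pos (by omega : 4 ≤ 2 * j + 2))
    calc 9 ^ (j + 1) = 9 ^ j * 9 := pow_succ _ _
      _ < 2 ^ (j * (j + 1) + 1) * 2 ^ (2 * j + 2) := Nat.mul_lt_mul_of_lt_of_le ih h9 (by norm_num)
      _ = 2 ^ ((j + 1) * (j + 1 + 1) + 1) := by rw [← pow_add]; ring_nf

lemma two_mul_le_of_two_pow_le_three_pow {K ℓ : ℕ} (hℓ : Even ℓ) (hℓ3 : 3 ≤ ℓ)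
    (h : 2 ^ (K * (K - 1) + 1) ≤ 3 ^ ℓ) : 2 * K ≤ ℓ := by
  by_contra! hlt
  obtain ⟨r, rfl⟩ := hℓ
  obtain ⟨j, rfl⟩ : ∃ j, K = j + 1 := ⟨K - 1, by omega⟩
  have h3 : 3 ^ (r + r) ≤ 9 ^ j := by
    rw [← two_mul, pow_mul]
    exact Nat.pow_le_pow_right (by norm_num) (by omega)
  have h9 := nine_pow_lt_two_pow (j := j) (by omega)
  rw [Nat.add_sub_cancel, mul_comm] at h
  omega

theorem exists_perms_forall_isCycle_two_mul_le_length {m q K : ℕ} (hK : 2 ≤ K)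
    (hm : 2 ^ (4 * (K * (K - 1))) ∣ m) (hq : Even q) :
    ∃ g : Bool → Perm (Fin m), (∀ a, g false a ≠ g true a) ∧
      ∀ x (w : (constDoubleStrip q g).Walk x x), w.IsCycle → 2 * K ≤ w.length := by
  obtain ⟨g, hg, hword⟩ := exists_sanov_perms (Nat.mul_pos (by omega) (by omega)) hm
  refine ⟨g, hg, fun x w hw => ?_⟩
  obtain ⟨L, hlen, hL, hx⟩ := exists_isReduced_of_isTrail w hw.isTrail
  have hne : L ≠ [] := List.ne_nil_of_length_pos (by linarith [hw.three_le_length])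
  exact two_mul_le_of_two_pow_le_three_pow (even_length_of_closed_walk hq w)
    hw.three_le_length (hlen ▸ hword L hL hne x.2 hx.symm)

/-- Double-strips of large girth exist. -/
theorem double_strip_of_large_girth (K' r : ℕ) (hK' : 1 ≤ K') (hr : 1 ≤ r) :
    ∀ m q : ℕ, m = 2 ^ (2 * K' * (2 * K' - 1)) →
      q = 2 ^ (2 * K' - 1) * r * Nat.factorial m →
      ∃ σ τ : Fin q → Equiv.Perm (Fin m),
        IsCyclicalStrip σ ∧ IsCyclicalStrip τ ∧
        (∀ (i : Fin q) (a : Fin m), σ i a ≠ τ i a) ∧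
        ((2 * K' : ℕ) : ℕ∞) ≤ (doubleStripGraph m q σ τ).girth := by
  intro m q hm hq
  have hm2 : 2 ≤ m := hm ▸ Nat.le_self_pow (Nat.mul_ne_zero (by omega) (by omega)) 2
  have : NeZero m := ⟨by omega⟩
  have hfac : m.factorial ∣ q := hq ▸ dvd_mul_left _ _
  have hq3 : 3 ≤ q := hq ▸ calc
    3 ≤ 2 * 1 * 2 := by norm_num
    _ ≤ 2 ^ (2 * K' - 1) * r * m.factorial := Nat.mul_le_mul (Nat.mul_le_mul
      (Nat.le_self_pow (by omega) 2) hr) (hm2.trans (Nat.self_le_factorial m))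
  have hq2 : Even q := hq ▸ ((Nat.even_pow.mpr ⟨even_two, by omega⟩).mul_right _).mul_right _
  obtain ⟨g, hg, hlong⟩ : ∃ g : Bool → Perm (Fin m), (∀ a, g false a ≠ g true a) ∧
      ∀ x (w : (constDoubleStrip q g).Walk x x), w.IsCycle → 2 * K' ≤ w.length := by
    obtain rfl | hK' := hK'.eq_or_lt
    · subst hm
      exact ⟨fun b => cond b (finRotate _) 1, by decide,
        fun x w hw => hw.three_le_length.trans' (by norm_num)⟩
    refine exists_perms_forall_isCycle_two_mul_le_length hK' (hm ▸ Nat.pow_dvd_pow 2 ?_) hq2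
    calc 4 * (K' * (K' - 1)) = 2 * K' * (2 * (K' - 1)) := by ring
      _ ≤ 2 * K' * (2 * K' - 1) := Nat.mul_le_mul_left _ (by omega)
  exact exists_doubleStrip_le_girth hfac hq3 g hg hlong
end
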